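/- arXiv:2205.11421 — 3 statements merged into one kernel-verified Lean document; each statement's English description precedes it below -/
import Mathlib

section
/- For every γ > 0 and C > 0 there exists λ > 0 such that, provided n²p = ω(log n), w.h.p. G ∼ H^3(n,p) satisfies the following: there are no two disjoint sets A, B ⊆ V(G) of sizes a and b such that 1 ≤ a ≤ λn, b ≤ Ca, and e_G(A, B, V(G)) ≥ γ·a·p·binom(n−1, 2). -/
open Finset

/-- The set of all 3-element subsets of `Fin n` (potential edges of a 3-uniform
hypergraph on vertex set `[n]`). -/
def triples (n : ℕ) : Finset (Finset (Fin n)) := Finset.univ.powersetCard 3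

open Classical in
/-- The probability that the binomial random 3-uniform hypergraph `H³(n,p)`
(each 3-set an edge independently with probability `p`) satisfies `P`. -/
noncomputable def probH3 (n : ℕ) (p : ℝ) (P : Finset (Finset (Fin n)) → Prop) : ℝ :=
  ∑ G ∈ (triples n).powerset,
    if P G then p ^ G.card * (1 - p) ^ ((triples n).card - G.card) else 0

open Classical in
/-- The probability, over the joint (independent) choice of `H³(n,p)` and of a
uniformly random `m`-element vertex subset `W`, that `P` holds. -/
noncomputable def probH3W (n : ℕ) (p : ℝ) (m : ℕ)
    (P : Finset (Finset (Fin n)) → Finset (Fin n) → Prop) : ℝ :=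
  ∑ G ∈ (triples n).powerset, ∑ W ∈ (Finset.univ : Finset (Fin n)).powersetCard m,
    if P G W then (p ^ G.card * (1 - p) ^ ((triples n).card - G.card)) / (n.choose m) else 0

variable {α : Type*} [DecidableEq α]

/-- `deg_G(S)`: the number of edges of `G` containing `S`. -/
def degSet (G : Finset (Finset α)) (S : Finset α) : ℕ :=
  (G.filter fun e => S ⊆ e).card

/-- `deg_G(S, W)`: number of edges containing `S` whose remaining vertices lie in `W`. -/
def degSetIn (G : Finset (Finset α)) (S W : Finset α) : ℕ :=
  (G.filter fun e => S ⊆ e ∧ e \ S ⊆ W).card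

/-- `e_G(X,Y,Z)`: the number of triples `(x,y,z) ∈ X × Y × Z` with `{x,y,z} ∈ G`. -/
def tripleCount (G : Finset (Finset α)) (X Y Z : Finset α) : ℕ :=
  ((X ×ˢ Y ×ˢ Z).filter fun t => ({t.1, t.2.1, t.2.2} : Finset α) ∈ G).card

/-- `e_G(Ps, W)`: the number of pairs `(P, w) ∈ Ps × W` with `P ∪ {w} ∈ G`. -/
def pairCount (G : Finset (Finset α)) (Ps : Finset (Finset α)) (W : Finset α) : ℕ :=
  ((Ps ×ˢ W).filter fun q => insert q.2 q.1 ∈ G).card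

/-- `e_G(X, Ps)`: the number of pairs `(x, P) ∈ X × Ps` with `{x} ∪ P ∈ G`. -/
def vertexPairCount (G : Finset (Finset α)) (X : Finset α) (Ps : Finset (Finset α)) : ℕ :=
  ((X ×ˢ Ps).filter fun q => insert q.1 q.2 ∈ G).card

/-- A loose path of length `ℓ` in `G`, with vertex sequence `v 0, …, v (2ℓ)`:
the vertices are distinct and `{v (2i), v (2i+1), v (2i+2)} ∈ G` for all `i < ℓ`. -/
def IsLoosePath (G : Finset (Finset α)) (ℓ : ℕ) (v : ℕ → α) : Prop :=
  (∀ i ≤ 2 * ℓ, ∀ j ≤ 2 * ℓ, v i = v j → i = j) ∧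
  ∀ i < ℓ, ({v (2 * i), v (2 * i + 1), v (2 * i + 2)} : Finset α) ∈ G

/-- The vertex set of a loose path of length `ℓ` with vertex sequence `v`. -/
def pathVerts (ℓ : ℕ) (v : ℕ → α) : Finset α := (Finset.range (2 * ℓ + 1)).image v

/-- The internal vertices of a loose path of length `ℓ` (everything except the two endpoints). -/
def intVerts (ℓ : ℕ) (v : ℕ → α) : Finset α := (Finset.Ioo 0 (2 * ℓ)).image v

/-- `G` has a loose Hamilton cycle: a cyclic ordering `f` of all `n` vertices such
that `{f(2i), f(2i+1), f(2i+2)}` is an edge for every `0 ≤ i < n/2` (indices mod `n`). -/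
def HasLooseHamCycle {n : ℕ} (G : Finset (Finset (Fin n))) : Prop :=
  ∃ f : ZMod n → Fin n, Function.Bijective f ∧
    ∀ i : ℕ, i < n / 2 →
      ({f ((2 * i : ℕ) : ZMod n), f ((2 * i + 1 : ℕ) : ZMod n),
        f ((2 * i + 2 : ℕ) : ZMod n)} : Finset (Fin n)) ∈ G


section Basic
variable {n : ℕ} {p : ℝ}

lemma weight_nonneg (h0 : 0 ≤ p) (h1 : p ≤ 1) (G : Finset (Finset (Fin n))) :
    0 ≤ p ^ G.card * (1 - p) ^ ((triples n).card - G.card) :=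
  mul_nonneg (pow_nonneg h0 _) (pow_nonneg (by linarith) _)

open Classical in
lemma probH3_nonneg (h0 : 0 ≤ p) (h1 : p ≤ 1) (P : Finset (Finset (Fin n)) → Prop) :
    0 ≤ probH3 n p P := by
  refine Finset.sum_nonneg fun G _ => ?_
  split
  · exact weight_nonneg h0 h1 G
  · exact le_refl 0

lemma mgf_eq (S : Finset (Finset (Fin n))) (hS : S ⊆ triples n) (z : ℝ) :
    ∑ G ∈ (triples n).powerset,
      p ^ G.card * (1 - p) ^ ((triples n).card - G.card) * z ^ (G ∩ S).card
      = (1 + p * (z - 1)) ^ S.card := by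
  classical
  calc ∑ G ∈ (triples n).powerset,
      p ^ G.card * (1 - p) ^ ((triples n).card - G.card) * z ^ (G ∩ S).card
      = ∑ G ∈ (triples n).powerset,
        (∏ e ∈ G, if e ∈ S then p * z else p) * ∏ e ∈ triples n \ G, (1 - p) := by
        refine Finset.sum_congr rfl fun G hG => ?_
        rw [Finset.mem_powerset] at hG
        rw [Finset.prod_ite, Finset.prod_const, Finset.prod_const, Finset.prod_const,
          Finset.filter_mem_eq_inter]
        have h1 : (G.filter fun e => e ∉ S).card = G.card - (G ∩ S).card := by
          rw [← Finset.card_inter_add_card_sdiff G S]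
          simp [Finset.sdiff_eq_filter]
        rw [h1, Finset.card_sdiff_of_subset hG, mul_pow]
        have h2 : (G ∩ S).card ≤ G.card := Finset.card_le_card (Finset.inter_subset_left)
        rw [show p ^ (G ∩ S).card * z ^ (G ∩ S).card * p ^ (G.card - (G ∩ S).card)
            = (p ^ (G ∩ S).card * p ^ (G.card - (G ∩ S).card)) * z ^ (G ∩ S).card by ring,
          ← pow_add, Nat.add_sub_cancel' h2]
        ring
    _ = ∏ e ∈ triples n, ((if e ∈ S then p * z else p) + (1 - p)) :=
        (Finset.prod_add _ _ _).symm
    _ = (1 + p * (z - 1)) ^ S.card := by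
        rw [Finset.prod_congr rfl (fun e _ =>
          show (if e ∈ S then p * z else p) + (1 - p)
             = if e ∈ S then 1 + p * (z - 1) else 1 by split <;> ring)]
        rw [Finset.prod_ite, Finset.prod_const, Finset.prod_const, one_pow, mul_one,
          Finset.filter_mem_eq_inter, Finset.inter_eq_right.mpr hS]

lemma probH3_total (h0 : 0 ≤ p) :
    ∑ G ∈ (triples n).powerset,
      p ^ G.card * (1 - p) ^ ((triples n).card - G.card) = 1 := by
  have := mgf_eq (p := p) (∅ : Finset (Finset (Fin n))) (Finset.empty_subset _) 1
  simpa using this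

open Classical in
lemma probH3_compl (P : Finset (Finset (Fin n))  → Prop) (h0 : 0 ≤ p) :
    probH3 n p P = 1 - probH3 n p (fun G => ¬ P G) := by
  have h := probH3_total (n := n) (p := p) h0
  rw [eq_sub_iff_add_eq, probH3, probH3, ← Finset.sum_add_distrib]
  refine (Finset.sum_congr rfl fun G _ => ?_).trans h
  by_cases hP : P G <;> simp [hP]

end Basic

section Chernoff
variable {n : ℕ} {p : ℝ}

open Classical in
lemma probH3_chernoff (h0 : 0 ≤ p) (h1 : p ≤ 1)
    (S : Finset (Finset (Fin n))) (hS : S ⊆ triples n) (k : ℕ) :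
    probH3 n p (fun G => k ≤ (G ∩ S).card) ≤ Real.exp (2 * p * S.card - k) := by
  classical
  set z : ℝ := Real.exp 1 with hz
  have hz1 : (1:ℝ) ≤ z := by rw [hz]; nlinarith [Real.add_one_le_exp (1:ℝ)]
  have hz0 : (0:ℝ) < z := lt_of_lt_of_le one_pos hz1
  have step1 : probH3 n p (fun G => k ≤ (G ∩ S).card) ≤
      (∑ G ∈ (triples n).powerset,
        p ^ G.card * (1 - p) ^ ((triples n).card - G.card) * z ^ (G ∩ S).card) / z ^ k := by
    rw [Finset.sum_div]
    refine Finset.sum_le_sum fun G _ => ?_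
    split
    · rename_i hk
      rw [le_div_iff₀ (by positivity)]
      exact mul_le_mul_of_nonneg_left (pow_le_pow_right₀ hz1 hk) (weight_nonneg h0 h1 G)
    · exact div_nonneg (mul_nonneg (weight_nonneg h0 h1 G) (by positivity)) (by positivity)
  have step2 : (∑ G ∈ (triples n).powerset,
        p ^ G.card * (1 - p) ^ ((triples n).card - G.card) * z ^ (G ∩ S).card) / z ^ k
      = (1 + p * (z - 1)) ^ S.card / z ^ k := by rw [mgf_eq S hS]
  have step3 : (1 + p * (z - 1)) ^ S.card / z ^ k ≤ Real.exp (2 * p * S.card - k) := by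
    have hbase : 1 + p * (z - 1) ≤ Real.exp (p * (z - 1)) := by
      have := Real.add_one_le_exp (p * (z - 1)); linarith
    have hbn : (0:ℝ) ≤ 1 + p * (z - 1) := by nlinarith
    have h4 : (1 + p * (z - 1)) ^ S.card ≤ Real.exp (p * (z - 1)) ^ S.card :=
      pow_le_pow_left₀ hbn hbase _
    rw [← Real.exp_nat_mul] at h4
    have h5 : z ^ k = Real.exp k := by rw [hz, ← Real.exp_nat_mul, mul_one]
    rw [h5, div_le_iff₀ (Real.exp_pos _), ← Real.exp_add]
    refine le_trans h4 (Real.exp_le_exp.mpr ?_)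
    have hzle : z - 1 ≤ 2 := by
      have : Real.exp 1 ≤ 3 := by
        have := Real.exp_one_lt_d9; linarith
      rw [hz]; linarith
    have key : 0 ≤ p * (S.card : ℝ) * (2 - (z - 1)) :=
      mul_nonneg (mul_nonneg h0 (Nat.cast_nonneg _)) (by linarith)
    nlinarith
  calc probH3 n p (fun G => k ≤ (G ∩ S).card) ≤ _ := step1
    _ = _ := step2
    _ ≤ _ := step3

open Classical in
lemma probH3_union_bound {ι : Type*} (h0 : 0 ≤ p) (h1 : p ≤ 1) (s : Finset ι)
    (P : Finset (Finset (Fin n)) → Prop) (Q : ι → Finset (Finset (Fin n)) → Prop)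
    (himp : ∀ G ∈ (triples n).powerset, ¬ P G → ∃ x ∈ s, Q x G) :
    probH3 n p (fun G => ¬ P G) ≤ ∑ x ∈ s, probH3 n p (Q x) := by
  classical
  unfold probH3
  rw [Finset.sum_comm]
  refine Finset.sum_le_sum fun G hG => ?_
  split
  · rename_i hP
    obtain ⟨x₀, hx₀, hQ⟩ := himp G hG hP
    calc p ^ G.card * (1 - p) ^ ((triples n).card - G.card)
        = if Q x₀ G then p ^ G.card * (1 - p) ^ ((triples n).card - G.card) else 0 := by
          simp [hQ]
      _ ≤ _ := Finset.single_le_sum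
          (f := fun x => if Q x G then
            p ^ G.card * (1 - p) ^ ((triples n).card - G.card) else (0:ℝ))
          (fun x _ => by
          split
          · exact weight_nonneg h0 h1 G
          · exact le_refl (0:ℝ)) hx₀
  · refine Finset.sum_nonneg fun x _ => ?_
    split
    · exact weight_nonneg h0 h1 G
    · exact le_refl (0:ℝ)

end Chernoff

section Comb
variable {n : ℕ}

/-- candidate edge set touching both `A` and `B` -/
def pairS (n : ℕ) (A B : Finset (Fin n)) : Finset (Finset (Fin n)) :=
  (triples n).filter (fun e => (∃ x ∈ A, x ∈ e) ∧ (∃ y ∈ B, y ∈ e))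

lemma pairS_subset (A B : Finset (Fin n)) : pairS n A B ⊆ triples n :=
  Finset.filter_subset _ _

lemma card_eq_three_of_mem_triples {e : Finset (Fin n)} (he : e ∈ triples n) : e.card = 3 :=
  (Finset.mem_powersetCard.mp he).2

lemma tripleCount_le (G : Finset (Finset (Fin n))) (hG : G ⊆ triples n)
    (A B : Finset (Fin n)) :
    tripleCount G A B Finset.univ ≤ 27 * (G ∩ pairS n A B).card := by
  classical
  refine Finset.card_le_mul_card_image_of_maps_to
    (f := fun t : Fin n × Fin n × Fin n => ({t.1, t.2.1, t.2.2} : Finset (Fin n)))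
    (t := G ∩ pairS n A B) ?_ 27 ?_
  · rintro ⟨x, y, z⟩ ht
    rw [Finset.mem_filter] at ht
    obtain ⟨hmem, hedge⟩ := ht
    rw [Finset.mem_product] at hmem
    obtain ⟨hx, hyz⟩ := hmem
    rw [Finset.mem_product] at hyz
    refine Finset.mem_inter.mpr ⟨hedge, Finset.mem_filter.mpr ⟨hG hedge, ?_, ?_⟩⟩
    · exact ⟨x, hx, by simp⟩
    · exact ⟨y, hyz.1, by simp⟩
  · intro b hb
    have hb3 : b.card = 3 :=
      card_eq_three_of_mem_triples (hG (Finset.mem_inter.mp hb).1)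
    calc (((A ×ˢ B ×ˢ Finset.univ).filter
          (fun t : Fin n × Fin n × Fin n => ({t.1, t.2.1, t.2.2} : Finset (Fin n)) ∈ G)).filter
          (fun t => ({t.1, t.2.1, t.2.2} : Finset (Fin n)) = b)).card
        ≤ (b ×ˢ b ×ˢ b).card := by
          refine Finset.card_le_card ?_
          rintro ⟨x, y, z⟩ ht
          rw [Finset.mem_filter] at ht
          have heq := ht.2
          rw [Finset.mem_product, Finset.mem_product]
          refine ⟨?_, ?_, ?_⟩ <;> rw [← heq] <;> simp
      _ = 27 := by simp [hb3]
      _ ≤ 27 := le_refl _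

lemma pairS_card (A B : Finset (Fin n)) (hAB : Disjoint A B) :
    (pairS n A B).card ≤ A.card * B.card * n := by
  classical
  have hsub : pairS n A B ⊆ (A ×ˢ B ×ˢ (Finset.univ : Finset (Fin n))).image
      (fun t : Fin n × Fin n × Fin n => ({t.1, t.2.1, t.2.2} : Finset (Fin n))) := by
    intro e he
    rw [pairS, Finset.mem_filter] at he
    obtain ⟨het, ⟨x, hxA, hxe⟩, ⟨y, hyB, hye⟩⟩ := he
    have hxy : x ≠ y := fun h => (Finset.disjoint_left.mp hAB hxA) (h ▸ hyB)
    have hsub2 : ({x, y} : Finset (Fin n)) ⊆ e := by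
      intro a ha; rw [Finset.mem_insert, Finset.mem_singleton] at ha
      rcases ha with rfl | rfl <;> assumption
    have hcard2 : ({x, y} : Finset (Fin n)).card = 2 := Finset.card_pair hxy
    have h1 : (e \ {x, y}).card = 1 := by
      rw [Finset.card_sdiff_of_subset hsub2, card_eq_three_of_mem_triples het, hcard2]
    obtain ⟨z, hz⟩ := Finset.card_eq_one.mp h1
    have he' : e = ({x, y, z} : Finset (Fin n)) := by
      have := Finset.sdiff_union_of_subset hsub2
      rw [hz] at this
      rw [← this]
      ext a
      simp only [Finset.mem_union, Finset.mem_singleton, Finset.mem_insert]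
      tauto
    refine Finset.mem_image.mpr ⟨(x, y, z), ?_, he'.symm⟩
    rw [Finset.mem_product, Finset.mem_product]
    exact ⟨hxA, hyB, Finset.mem_univ _⟩
  calc (pairS n A B).card ≤ _ := Finset.card_le_card hsub
    _ ≤ (A ×ˢ B ×ˢ (Finset.univ : Finset (Fin n))).card := Finset.card_image_le
    _ = A.card * B.card * n := by
      simp [Finset.card_product, mul_assoc]

end Comb

section Count

lemma count_small (n m : ℕ) (hmn : m + 1 ≤ n) :
    (((Finset.univ.powerset : Finset (Finset (Fin n))).filter
      (fun B => B.card ≤ m)).card) ≤ n ^ (m + 1) := by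
  classical
  have hsub : ((Finset.univ.powerset : Finset (Finset (Fin n))).filter
      (fun B => B.card ≤ m)) ⊆ (Finset.range (m+1)).biUnion
      (fun b => Finset.univ.powersetCard b) := by
    intro B hB
    rw [Finset.mem_filter] at hB
    refine Finset.mem_biUnion.mpr ⟨B.card, Finset.mem_range.mpr (Nat.lt_succ_of_le hB.2), ?_⟩
    exact Finset.mem_powersetCard.mpr ⟨Finset.subset_univ _, rfl⟩
  calc _ ≤ ((Finset.range (m+1)).biUnion (fun b => Finset.univ.powersetCard b)).card :=
        Finset.card_le_card hsub
    _ ≤ ∑ b ∈ Finset.range (m+1), (Finset.univ.powersetCard b : Finset (Finset (Fin n))).card :=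
        Finset.card_biUnion_le
    _ ≤ ∑ b ∈ Finset.range (m+1), n ^ m := by
        refine Finset.sum_le_sum fun b hb => ?_
        rw [Finset.card_powersetCard, Finset.card_univ, Fintype.card_fin]
        calc n.choose b ≤ n ^ b := Nat.choose_le_pow _ _
          _ ≤ n ^ m := Nat.pow_le_pow_right (le_trans (by omega) hmn)
              (Nat.lt_succ_iff.mp (Finset.mem_range.mp hb))
    _ = (m + 1) * n ^ m := by rw [Finset.sum_const, Finset.card_range, smul_eq_mul]
    _ ≤ n * n ^ m := Nat.mul_le_mul_right _ hmn
    _ = n ^ (m + 1) := by ring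

end Count

section SumPairs

open Classical in
lemma sum_pairs_le (n : ℕ) (hn : 9 ≤ n) (r C lam : ℝ) (hr0 : 0 ≤ r)
    (hC : 0 < C) (hlamC : C * lam ≤ 1/1000)
    (hv : (n:ℝ) * ((n:ℝ) ^ (C:ℝ) * r) ≤ 1) :
    ∑ AB ∈ ((Finset.univ.powerset ×ˢ Finset.univ.powerset :
        Finset (Finset (Fin n) × Finset (Fin n))).filter
        (fun AB => Disjoint AB.1 AB.2 ∧ 1 ≤ AB.1.card ∧ (AB.1.card:ℝ) ≤ lam * n ∧
          (AB.2.card:ℝ) ≤ C * AB.1.card)),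
      (r : ℝ) ^ AB.1.card ≤ (n:ℝ) * (((n:ℝ) + 1) * ((n:ℝ) * ((n:ℝ) ^ (C:ℝ) * r))) := by
  classical
  have hn9 : (9:ℝ) ≤ n := by exact_mod_cast hn
  have hn0 : (0:ℝ) < n := by linarith
  have hn1 : (1:ℝ) ≤ n := by linarith
  set v : ℝ := (n:ℝ) ^ (C:ℝ) * r with hvdef
  have hv0 : 0 ≤ v := mul_nonneg (Real.rpow_nonneg (le_of_lt hn0) _) hr0
  rw [Finset.sum_filter, Finset.sum_product]
  -- inner bound per A
  have inner_le : ∀ A : Finset (Fin n),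
      (∑ B ∈ (Finset.univ.powerset : Finset (Finset (Fin n))),
        if Disjoint A B ∧ 1 ≤ A.card ∧ (A.card:ℝ) ≤ lam * n ∧ (B.card:ℝ) ≤ C * A.card
        then r ^ A.card else 0)
      ≤ if 1 ≤ A.card then (n:ℝ) * v ^ A.card else 0 := by
    intro A
    by_cases h1 : 1 ≤ A.card
    case neg =>
      simp only [h1, if_false]
      refine le_of_eq (Finset.sum_eq_zero fun B _ => ?_)
      simp [h1]
    case pos =>
      rw [if_pos h1]
      by_cases h2 : (A.card:ℝ) ≤ lam * n
      case neg =>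
        refine le_trans (le_of_eq (Finset.sum_eq_zero fun B _ => by simp [h2])) ?_
        positivity
      case pos =>
        set m : ℕ := ⌊C * (A.card:ℝ)⌋₊ with hmdef
        have hCa0 : 0 ≤ C * (A.card:ℝ) := mul_nonneg (le_of_lt hC) (Nat.cast_nonneg _)
        have hmCa : (m:ℝ) ≤ C * A.card := Nat.floor_le hCa0
        have hmn : m + 1 ≤ n := by
          have h3 : (m:ℝ) ≤ C * (lam * n) := le_trans hmCa
            (mul_le_mul_of_nonneg_left h2 (le_of_lt hC))
          have h4 : C * (lam * n) ≤ n / 1000 := by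
            rw [← mul_assoc]
            calc C * lam * n ≤ (1/1000) * n :=
              mul_le_mul_of_nonneg_right hlamC (le_of_lt hn0)
              _ = n / 1000 := by ring
          have h5 : (m:ℝ) + 1 ≤ n := by
            have : (n:ℝ) / 1000 + 1 ≤ n := by linarith
            linarith
          exact_mod_cast h5
        calc (∑ B ∈ (Finset.univ.powerset : Finset (Finset (Fin n))),
            if Disjoint A B ∧ 1 ≤ A.card ∧ (A.card:ℝ) ≤ lam * n ∧ (B.card:ℝ) ≤ C * A.card
            then r ^ A.card else 0)
            ≤ ∑ B ∈ (Finset.univ.powerset : Finset (Finset (Fin n))),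
              if (B.card:ℝ) ≤ C * A.card then r ^ A.card else 0 := by
              refine Finset.sum_le_sum fun B _ => ?_
              by_cases hfull : Disjoint A B ∧ 1 ≤ A.card ∧ (A.card:ℝ) ≤ lam * n ∧
                  (B.card:ℝ) ≤ C * A.card
              · rw [if_pos hfull, if_pos hfull.2.2.2]
              · rw [if_neg hfull]
                split
                · positivity
                · exact le_refl _
          _ = (((Finset.univ.powerset : Finset (Finset (Fin n))).filter
              (fun B => (B.card:ℝ) ≤ C * A.card)).card : ℝ) * r ^ A.card := by
              rw [← Finset.sum_filter, Finset.sum_const, nsmul_eq_mul]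
          _ ≤ ((n ^ (m+1) : ℕ) : ℝ) * r ^ A.card := by
              refine mul_le_mul_of_nonneg_right ?_ (by positivity)
              have hsub : ((Finset.univ.powerset : Finset (Finset (Fin n))).filter
                  (fun B => (B.card:ℝ) ≤ C * A.card)) ⊆
                  ((Finset.univ.powerset : Finset (Finset (Fin n))).filter
                  (fun B => B.card ≤ m)) := by
                intro B hB
                rw [Finset.mem_filter] at hB ⊢
                exact ⟨hB.1, Nat.le_floor hB.2⟩
              have := le_trans (Finset.card_le_card hsub) (count_small n m hmn)
              exact_mod_cast this
          _ ≤ (n:ℝ) * v ^ A.card := by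
              have hcast : ((n ^ (m+1) : ℕ) : ℝ) = (n:ℝ) * (n:ℝ) ^ (m:ℕ) := by
                push_cast; ring
              rw [hcast, hvdef, mul_pow, mul_assoc]
              refine mul_le_mul_of_nonneg_left ?_ (le_of_lt hn0)
              refine mul_le_mul_of_nonneg_right ?_ (by positivity)
              calc (n:ℝ) ^ (m:ℕ) = (n:ℝ) ^ ((m:ℕ):ℝ) := (Real.rpow_natCast _ _).symm
                _ ≤ (n:ℝ) ^ (C * (A.card:ℝ)) :=
                  Real.rpow_le_rpow_of_exponent_le hn1 hmCa
                _ = ((n:ℝ) ^ (C:ℝ)) ^ (A.card : ℕ) := by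
                  rw [← Real.rpow_natCast ((n:ℝ) ^ (C:ℝ)) A.card,
                    ← Real.rpow_mul (le_of_lt hn0)]
  calc (∑ A ∈ (Finset.univ.powerset : Finset (Finset (Fin n))),
        ∑ B ∈ (Finset.univ.powerset : Finset (Finset (Fin n))),
        if Disjoint A B ∧ 1 ≤ A.card ∧ (A.card:ℝ) ≤ lam * n ∧ (B.card:ℝ) ≤ C * A.card
        then r ^ A.card else 0)
      ≤ ∑ A ∈ (Finset.univ.powerset : Finset (Finset (Fin n))),
        if 1 ≤ A.card then (n:ℝ) * v ^ A.card else 0 :=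
      Finset.sum_le_sum fun A _ => inner_le A
    _ = ∑ j ∈ Finset.range ((Finset.univ : Finset (Fin n)).card + 1),
        ∑ A ∈ (Finset.univ.powersetCard j : Finset (Finset (Fin n))),
        (if 1 ≤ A.card then (n:ℝ) * v ^ A.card else 0) := by
        rw [Finset.powerset_card_disjiUnion]; exact Finset.sum_disjiUnion _ _ _
    _ ≤ ∑ j ∈ Finset.range ((Finset.univ : Finset (Fin n)).card + 1), (n:ℝ) * (n * v) := by
        refine Finset.sum_le_sum fun j _ => ?_
        have hcards : ∀ A ∈ (Finset.univ.powersetCard j : Finset (Finset (Fin n))),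
            (if 1 ≤ A.card then (n:ℝ) * v ^ A.card else 0)
            = (if 1 ≤ j then (n:ℝ) * v ^ j else 0) := by
          intro A hA
          rw [(Finset.mem_powersetCard.mp hA).2]
        rw [Finset.sum_congr rfl hcards, Finset.sum_const, Finset.card_powersetCard,
          Finset.card_univ, Fintype.card_fin, nsmul_eq_mul]
        by_cases hj : 1 ≤ j
        case neg =>
          rw [if_neg hj, mul_zero]
          positivity
        case pos =>
          rw [if_pos hj]
          have hch : ((n.choose j : ℕ) : ℝ) ≤ (n:ℝ) ^ j := by
            exact_mod_cast Nat.choose_le_pow n j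
          calc ((n.choose j : ℕ) : ℝ) * ((n:ℝ) * v ^ j)
              ≤ (n:ℝ) ^ j * ((n:ℝ) * v ^ j) :=
                mul_le_mul_of_nonneg_right hch (by positivity)
            _ = (n:ℝ) * ((n:ℝ) * v) ^ j := by rw [mul_pow]; ring
            _ ≤ (n:ℝ) * ((n:ℝ) * v) ^ 1 := by
                refine mul_le_mul_of_nonneg_left ?_ (le_of_lt hn0)
                exact pow_le_pow_of_le_one (by positivity) hv hj
            _ = (n:ℝ) * ((n:ℝ) * v) := by rw [pow_one]
    _ ≤ (n:ℝ) * (((n:ℝ) + 1) * ((n:ℝ) * v)) := by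
        rw [Finset.sum_const, Finset.card_range, Finset.card_univ, Fintype.card_fin,
          nsmul_eq_mul]
        push_cast
        nlinarith [mul_nonneg (mul_nonneg (le_of_lt hn0) (le_of_lt hn0)) hv0]

end SumPairs

section MainBound

set_option maxHeartbeats 1000000 in
open Classical in
lemma main_bound (n : ℕ) (p γ₀ C : ℝ) (h0 : 0 ≤ p) (h1 : p ≤ 1) (hγ0 : 0 < γ₀)
    (hγ1 : γ₀ ≤ 1) (hC : 0 < C) (hn : 9 ≤ n)
    (hlarge : (C + 5) * 100 / γ₀ * Real.log n ≤ p * (n:ℝ)^2) :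
    probH3 n p (fun G => ¬ (∀ A B : Finset (Fin n), Disjoint A B →
      1 ≤ A.card → (A.card:ℝ) ≤ (γ₀ / (1000 * C)) * n → (B.card:ℝ) ≤ C * A.card →
      (tripleCount G A B Finset.univ : ℝ) < γ₀ * A.card * p * (((n-1).choose 2 : ℕ) : ℝ)))
    ≤ 2 / n := by
  classical
  have hn9 : (9:ℝ) ≤ n := by exact_mod_cast hn
  have hn0 : (0:ℝ) < n := by linarith
  have hn1 : (1:ℝ) ≤ n := by linarith
  set lam : ℝ := γ₀ / (1000 * C) with hlamdef
  set X : ℝ := (((n-1).choose 2 : ℕ) : ℝ) with hXdef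
  have hX0 : 0 ≤ X := Nat.cast_nonneg _
  have hX3 : (n:ℝ)^2 / 3 ≤ X := by
    rw [hXdef, Nat.cast_choose_two]
    have hc : ((n-1:ℕ):ℝ) = (n:ℝ) - 1 := by
      push_cast [Nat.cast_sub (show 1 ≤ n by omega)]; ring
    rw [hc]
    nlinarith
  set r : ℝ := Real.exp (-(γ₀ * p * (n:ℝ)^2 / 100)) with hrdef
  have hr0 : 0 ≤ r := le_of_lt (Real.exp_pos _)
  set s : Finset (Finset (Fin n) × Finset (Fin n)) :=
    ((Finset.univ.powerset ×ˢ Finset.univ.powerset :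
        Finset (Finset (Fin n) × Finset (Fin n))).filter
        (fun AB => Disjoint AB.1 AB.2 ∧ 1 ≤ AB.1.card ∧ (AB.1.card:ℝ) ≤ lam * n ∧
          (AB.2.card:ℝ) ≤ C * AB.1.card)) with hsdef
  set k : Finset (Fin n) → ℕ :=
    fun A => ⌈γ₀ * A.card * p * X / 27⌉₊ with hkdef
  set Q : Finset (Fin n) × Finset (Fin n) → Finset (Finset (Fin n)) → Prop :=
    fun AB G => k AB.1 ≤ (G ∩ pairS n AB.1 AB.2).card with hQdef
  -- union bound step
  have himp : ∀ G ∈ (triples n).powerset,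
      ¬ (∀ A B : Finset (Fin n), Disjoint A B →
        1 ≤ A.card → (A.card:ℝ) ≤ lam * n → (B.card:ℝ) ≤ C * A.card →
        (tripleCount G A B Finset.univ : ℝ) < γ₀ * A.card * p * X) →
      ∃ AB ∈ s, Q AB G := by
    intro G hG hP
    push_neg at hP
    obtain ⟨A, B, hd, ha1, ha2, hb, hge⟩ := hP
    refine ⟨(A, B), ?_, ?_⟩
    · rw [hsdef, Finset.mem_filter, Finset.mem_product]
      exact ⟨⟨Finset.mem_powerset.mpr (Finset.subset_univ _),
        Finset.mem_powerset.mpr (Finset.subset_univ _)⟩, hd, ha1, ha2, hb⟩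
    · have htc : (tripleCount G A B Finset.univ : ℝ) ≤
          27 * ((G ∩ pairS n A B).card : ℝ) := by
        exact_mod_cast tripleCount_le G (Finset.mem_powerset.mp hG) A B
      refine Nat.ceil_le.mpr ?_
      rw [div_le_iff₀ (by norm_num : (0:ℝ) < 27)]
      calc γ₀ * A.card * p * X ≤ (tripleCount G A B Finset.univ : ℝ) := hge
        _ ≤ ((G ∩ pairS n A B).card : ℝ) * 27 := by linarith
  -- per-pair bound
  have hpair : ∀ AB ∈ s, probH3 n p (Q AB) ≤ r ^ AB.1.card := by
    rintro ⟨A, B⟩ hAB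
    rw [hsdef, Finset.mem_filter] at hAB
    obtain ⟨-, hd, ha1, ha2, hb⟩ := hAB
    have hcher := probH3_chernoff h0 h1 (pairS n A B) (pairS_subset A B) (k A)
    refine le_trans hcher ?_
    have hrpow : (r : ℝ) ^ A.card = Real.exp ((A.card : ℝ) * (-(γ₀ * p * (n:ℝ)^2 / 100))) := by
      rw [hrdef, ← Real.exp_nat_mul]
    rw [hrpow]
    refine Real.exp_le_exp.mpr ?_
    set a : ℝ := (A.card : ℝ) with hadef
    have ha0 : (1:ℝ) ≤ a := Nat.one_le_cast.mpr ha1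
    have hSle : ((pairS n A B).card : ℝ) ≤ a * (C * a) * n := by
      have h5 : ((pairS n A B).card : ℝ) ≤ (A.card : ℝ) * (B.card : ℝ) * n := by
        exact_mod_cast pairS_card A B hd
      have h6 : (A.card : ℝ) * (B.card : ℝ) * n ≤ a * (C * a) * n := by
        refine mul_le_mul_of_nonneg_right ?_ (le_of_lt hn0)
        exact mul_le_mul_of_nonneg_left hb (Nat.cast_nonneg _)
      linarith
    have hk1 : γ₀ * a * p * X / 27 ≤ (k A : ℝ) := Nat.le_ceil _
    have hk2 : γ₀ * a * p * ((n:ℝ)^2 / 3) / 27 ≤ (k A : ℝ) := by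
      refine le_trans ?_ hk1
      have : 0 ≤ γ₀ * a * p := by positivity
      have := mul_le_mul_of_nonneg_left hX3 this
      linarith
    have haln : a ≤ lam * n := ha2
    have hCla : C * lam = γ₀ / 1000 := by
      rw [hlamdef]; field_simp
    -- 2 p |S| ≤ γ₀ p a n² / 500
    have hterm1 : 2 * p * ((pairS n A B).card : ℝ) ≤ γ₀ * p * a * (n:ℝ)^2 / 500 := by
      have h7 : 2 * p * ((pairS n A B).card : ℝ) ≤ 2 * p * (a * (C * a) * n) := by
        refine mul_le_mul_of_nonneg_left hSle (by positivity)
      have h8 : a * (C * a) * n ≤ a * (C * (lam * n)) * n := by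
        have := mul_le_mul_of_nonneg_left haln (le_of_lt hC)
        nlinarith
      have h9 : 2 * p * (a * (C * (lam * n)) * n) = 2 * p * a * (C * lam) * (n:ℝ)^2 := by
        ring
      rw [hCla] at h9
      have h10 : 2 * p * a * (γ₀ / 1000) * (n:ℝ)^2 = γ₀ * p * a * (n:ℝ)^2 / 500 := by ring
      nlinarith [mul_nonneg (mul_nonneg (by norm_num : (0:ℝ) ≤ 2) h0)
        (mul_nonneg (mul_nonneg (by linarith : (0:ℝ) ≤ a)
          (mul_nonneg (le_of_lt hC) (by linarith : (0:ℝ) ≤ a))) (le_of_lt hn0))]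
    have hfinal : 2 * p * ((pairS n A B).card : ℝ) - (k A : ℝ) ≤
        a * (-(γ₀ * p * (n:ℝ)^2 / 100)) := by
      have h11 : γ₀ * a * p * ((n:ℝ)^2 / 3) / 27 = γ₀ * p * a * (n:ℝ)^2 / 81 := by ring
      rw [h11] at hk2
      have h12 : 0 ≤ γ₀ * p * a * (n:ℝ)^2 := by positivity
      nlinarith
    exact hfinal
  -- assemble
  have hub := probH3_union_bound h0 h1 s _ Q himp
  have hsum : ∑ AB ∈ s, probH3 n p (Q AB) ≤ ∑ AB ∈ s, r ^ AB.1.card :=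
    Finset.sum_le_sum hpair
  -- bound r by n^-(C+5)
  have hlog0 : 0 ≤ Real.log n := Real.log_nonneg hn1
  have hrle : r ≤ (n:ℝ) ^ (-(C + 5) : ℝ) := by
    rw [hrdef, Real.rpow_def_of_pos hn0]
    refine Real.exp_le_exp.mpr ?_
    rw [mul_neg, neg_le_neg_iff, mul_comm]
    have h' : (C + 5) * 100 * Real.log n ≤ γ₀ * (p * (n:ℝ)^2) := by
      have h'' := mul_le_mul_of_nonneg_left hlarge (le_of_lt hγ0)
      calc (C + 5) * 100 * Real.log n
          = γ₀ * ((C + 5) * 100 / γ₀ * Real.log n) := by field_simp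
        _ ≤ γ₀ * (p * (n:ℝ)^2) := h''
    linarith
  have hv : (n:ℝ) * ((n:ℝ) ^ (C:ℝ) * r) ≤ 1 := by
    have h13 : (n:ℝ) ^ (C:ℝ) * r ≤ (n:ℝ) ^ (C:ℝ) * (n:ℝ) ^ (-(C + 5) : ℝ) :=
      mul_le_mul_of_nonneg_left hrle (Real.rpow_nonneg (le_of_lt hn0) _)
    have h14 : (n:ℝ) ^ (C:ℝ) * (n:ℝ) ^ (-(C + 5) : ℝ) = (n:ℝ) ^ (-(5:ℝ)) := by
      rw [← Real.rpow_add hn0]; norm_num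
    have h15 : (n:ℝ) * (n:ℝ) ^ (-(5:ℝ)) = (n:ℝ) ^ (-(4:ℝ)) := by
      nth_rewrite 1 [← Real.rpow_one (n:ℝ)]
      rw [← Real.rpow_add hn0]; norm_num
    calc (n:ℝ) * ((n:ℝ) ^ (C:ℝ) * r) ≤ (n:ℝ) * (n:ℝ) ^ (-(5:ℝ)) := by
          refine mul_le_mul_of_nonneg_left (le_trans h13 (le_of_eq h14)) (le_of_lt hn0)
      _ = (n:ℝ) ^ (-(4:ℝ)) := h15
      _ ≤ 1 := Real.rpow_le_one_of_one_le_of_nonpos hn1 (by norm_num)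
  have hlamC : C * lam ≤ 1 / 1000 := by
    rw [hlamdef]
    rw [show C * (γ₀ / (1000 * C)) = γ₀ / 1000 by field_simp]
    linarith
  have hsp := sum_pairs_le n hn r C lam hr0 hC hlamC hv
  -- final numeric
  have hfin : (n:ℝ) * (((n:ℝ) + 1) * ((n:ℝ) * ((n:ℝ) ^ (C:ℝ) * r))) ≤ 2 / n := by
    have h13 : (n:ℝ) ^ (C:ℝ) * r ≤ (n:ℝ) ^ (-(5:ℝ)) := by
      refine le_trans (mul_le_mul_of_nonneg_left hrle
        (Real.rpow_nonneg (le_of_lt hn0) _)) (le_of_eq ?_)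
      rw [← Real.rpow_add hn0]; norm_num
    have h16 : (0:ℝ) ≤ (n:ℝ) ^ (-(5:ℝ)) := Real.rpow_nonneg (le_of_lt hn0) _
    have h17 : (n:ℝ) * (((n:ℝ) + 1) * ((n:ℝ) * ((n:ℝ) ^ (C:ℝ) * r)))
        ≤ (n:ℝ) * (((n:ℝ) + 1) * ((n:ℝ) * (n:ℝ) ^ (-(5:ℝ)))) := by
      gcongr <;> first | exact h13 | positivity | linarith
    have h18 : (n:ℝ) * (((n:ℝ) + 1) * ((n:ℝ) * (n:ℝ) ^ (-(5:ℝ))))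
        ≤ 2 * (n:ℝ)^3 * (n:ℝ) ^ (-(5:ℝ)) := by
      have h18a : (n:ℝ) + 1 ≤ 2 * n := by linarith
      calc (n:ℝ) * (((n:ℝ) + 1) * ((n:ℝ) * (n:ℝ) ^ (-(5:ℝ))))
          ≤ (n:ℝ) * ((2 * (n:ℝ)) * ((n:ℝ) * (n:ℝ) ^ (-(5:ℝ)))) := by
            gcongr <;> first | positivity | linarith
        _ = 2 * (n:ℝ)^3 * (n:ℝ) ^ (-(5:ℝ)) := by ring
    have h19 : 2 * (n:ℝ)^3 * (n:ℝ) ^ (-(5:ℝ)) = 2 * (n:ℝ) ^ (-(2:ℝ)) := by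
      rw [show ((n:ℝ))^3 = (n:ℝ) ^ ((3:ℕ):ℝ) by rw [Real.rpow_natCast],
        mul_assoc, ← Real.rpow_add hn0]
      norm_num
    have h20 : 2 * (n:ℝ) ^ (-(2:ℝ)) ≤ 2 / n := by
      rw [show (2:ℝ) / n = 2 * (n:ℝ) ^ (-(1:ℝ)) by
        rw [Real.rpow_neg_one]; ring]
      refine mul_le_mul_of_nonneg_left ?_ (by norm_num)
      exact Real.rpow_le_rpow_of_exponent_le hn1 (by norm_num)
    linarith
  exact le_trans hub (le_trans hsum (le_trans hsp hfin))

end MainBound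

section Final
variable {n : ℕ} {p : ℝ}

open Classical in
lemma probH3_mono (h0 : 0 ≤ p) (h1 : p ≤ 1)
    (P P' : Finset (Finset (Fin n)) → Prop) (h : ∀ G, P G → P' G) :
    probH3 n p P ≤ probH3 n p P' := by
  refine Finset.sum_le_sum fun G hG => ?_
  by_cases hP : P G
  · rw [if_pos hP, if_pos (h G hP)]
  · rw [if_neg hP]
    split
    · exact weight_nonneg h0 h1 G
    · exact le_refl _

open Classical in
lemma probH3_le_one (h0 : 0 ≤ p) (h1 : p ≤ 1) (P : Finset (Finset (Fin n)) → Prop) :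
    probH3 n p P ≤ 1 := by
  have h := probH3_compl P h0
  have h2 := probH3_nonneg h0 h1 (fun G => ¬ P G)
  linarith

end Final


set_option maxHeartbeats 1000000

/-- Lemma 2.1: no small sets `A, B` with `b ≤ C·a` carry too many
edges, provided `n²p = ω(log n)`. -/
theorem stmt_1 :
    ∀ γ C : ℝ, 0 < γ → 0 < C →
    ∃ lam : ℝ, 0 < lam ∧
      ∀ p : ℕ → ℝ, (∀ n, 0 ≤ p n ∧ p n ≤ 1) →
        Filter.Tendsto (fun n : ℕ => (n : ℝ) ^ 2 * p n / Real.log n)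
          Filter.atTop Filter.atTop →
        Filter.Tendsto
          (fun n : ℕ => probH3 n (p n) (fun G =>
            ∀ A B : Finset (Fin n), Disjoint A B →
              1 ≤ A.card → (A.card : ℝ) ≤ lam * n → (B.card : ℝ) ≤ C * A.card →
              (tripleCount G A B Finset.univ : ℝ) < γ * A.card * p n * ((n - 1).choose 2)))
          Filter.atTop (nhds 1) := by

  intro γ C hγ hC
  set γ₀ : ℝ := min γ 1 with hγ₀def
  have hγ₀0 : 0 < γ₀ := lt_min hγ one_pos
  have hγ₀1 : γ₀ ≤ 1 := min_le_right _ _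
  have hγ₀γ : γ₀ ≤ γ := min_le_left _ _
  refine ⟨γ₀ / (1000 * C), by positivity, ?_⟩
  intro p hp hω
  set K : ℝ := (C + 5) * 100 / γ₀ with hKdef
  -- lower bound eventually
  have hlower : ∀ᶠ n : ℕ in Filter.atTop,
      1 - 2 / (n:ℝ) ≤ probH3 n (p n) (fun G =>
        ∀ A B : Finset (Fin n), Disjoint A B →
          1 ≤ A.card → (A.card : ℝ) ≤ (γ₀ / (1000 * C)) * n → (B.card : ℝ) ≤ C * A.card →
          (tripleCount G A B Finset.univ : ℝ) < γ * A.card * p n * ((n - 1).choose 2)) := by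
    filter_upwards [hω.eventually_ge_atTop K, Filter.eventually_ge_atTop 9] with n hK hn9
    have hn1 : (1:ℝ) < n := by
      have : (9:ℝ) ≤ n := by exact_mod_cast hn9
      linarith
    have hlog : 0 < Real.log n := Real.log_pos hn1
    have hlarge : K * Real.log n ≤ p n * (n:ℝ)^2 := by
      have h' := (le_div_iff₀ hlog).mp hK
      nlinarith [h']
    have hmb := main_bound n (p n) γ₀ C (hp n).1 (hp n).2 hγ₀0 hγ₀1 hC hn9 hlarge
    have hcompl := probH3_compl (n := n) (p := p n)
      (fun G => ∀ A B : Finset (Fin n), Disjoint A B →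
        1 ≤ A.card → (A.card : ℝ) ≤ (γ₀ / (1000 * C)) * n → (B.card : ℝ) ≤ C * A.card →
        (tripleCount G A B Finset.univ : ℝ) < γ₀ * A.card * p n * (((n-1).choose 2 : ℕ) : ℝ))
      (hp n).1
    have hmono := probH3_mono (n := n) (hp n).1 (hp n).2
      (fun G => ∀ A B : Finset (Fin n), Disjoint A B →
        1 ≤ A.card → (A.card : ℝ) ≤ (γ₀ / (1000 * C)) * n → (B.card : ℝ) ≤ C * A.card →
        (tripleCount G A B Finset.univ : ℝ) < γ₀ * A.card * p n * (((n-1).choose 2 : ℕ) : ℝ))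
      (fun G => ∀ A B : Finset (Fin n), Disjoint A B →
        1 ≤ A.card → (A.card : ℝ) ≤ (γ₀ / (1000 * C)) * n → (B.card : ℝ) ≤ C * A.card →
        (tripleCount G A B Finset.univ : ℝ) < γ * A.card * p n * ((n - 1).choose 2))
      (fun G hG => by
        intro A B hd h1 h2 h3
        refine lt_of_lt_of_le (hG A B hd h1 h2 h3) ?_
        have hX0 : (0:ℝ) ≤ (((n-1).choose 2 : ℕ) : ℝ) := Nat.cast_nonneg _
        refine mul_le_mul_of_nonneg_right ?_ hX0
        refine mul_le_mul_of_nonneg_right ?_ (hp n).1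
        exact mul_le_mul_of_nonneg_right hγ₀γ (Nat.cast_nonneg _))
    linarith
  -- squeeze
  have hone : Filter.Tendsto (fun n : ℕ => 1 - 2 / (n:ℝ)) Filter.atTop (nhds 1) := by
    have h2 := tendsto_const_div_atTop_nhds_zero_nat (2:ℝ)
    have := Filter.Tendsto.sub (tendsto_const_nhds (x := (1:ℝ)) (f := Filter.atTop)) h2
    simpa using this
  refine tendsto_of_tendsto_of_tendsto_of_le_of_le' hone tendsto_const_nhds hlower ?_
  exact Filter.Eventually.of_forall fun n => probH3_le_one (hp n).1 (hp n).2 _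
end

section
/- For every ε ∈ (0, 1/300), w.h.p. G ∼ H^3(n,p) satisfies the following for all sets X, Y ⊆ V(G) of sizes x and y respectively: (i) if y ≤ x ≤ ε^{-3}·log n/(np) then e_G(X, Y, V(G)) ≤ ε^{-4}·x·log n; (ii) if x, y ≥ ε^{-3}·log n/(np) then e_G(X, Y, V(G)) ≤ (1+ε)·x·y·n·p. -/
open Finset

variable {α : Type*} [DecidableEq α]

namespace Stmt2

noncomputable def wt (n : ℕ) (p : ℝ) (G : Finset (Finset (Fin n))) : ℝ :=
  p ^ G.card * (1 - p) ^ ((triples n).card - G.card)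

variable {n : ℕ} {p : ℝ}

lemma wt_nonneg (hp0 : 0 ≤ p) (hp1 : p ≤ 1) (G : Finset (Finset (Fin n))) :
    0 ≤ wt n p G :=
  mul_nonneg (pow_nonneg hp0 _) (pow_nonneg (by linarith) _)

open Classical in
lemma probH3_eq (P : Finset (Finset (Fin n)) → Prop) :
    probH3 n p P = ∑ G ∈ (triples n).powerset, if P G then wt n p G else 0 := rfl

lemma mgf (a : Finset (Fin n) → ℝ) :
    ∑ G ∈ (triples n).powerset, wt n p G * ∏ T ∈ G, a T
      = ∏ T ∈ triples n, (p * a T + (1 - p)) := by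
  rw [Finset.prod_add]
  apply Finset.sum_congr rfl
  intro G hG
  rw [Finset.prod_mul_distrib, Finset.prod_const, Finset.prod_const,
    Finset.card_sdiff_of_subset (Finset.mem_powerset.mp hG)]
  unfold wt; ring

lemma sum_wt_eq_one (hp0 : 0 ≤ p) (hp1 : p ≤ 1) :
    ∑ G ∈ (triples n).powerset, wt n p G = 1 := by
  have := mgf (n := n) (p := p) (fun _ => 1)
  simpa using this

open Classical in
lemma probH3_le_one (hp0 : 0 ≤ p) (hp1 : p ≤ 1) (P : Finset (Finset (Fin n)) → Prop) :
    probH3 n p P ≤ 1 := by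
  rw [probH3_eq, ← sum_wt_eq_one (n := n) hp0 hp1]
  apply Finset.sum_le_sum
  intro G hG
  split
  · exact le_refl _
  · exact wt_nonneg hp0 hp1 G

open Classical in
lemma probH3_mono (hp0 : 0 ≤ p) (hp1 : p ≤ 1) {P Q : Finset (Finset (Fin n)) → Prop}
    (h : ∀ G ∈ (triples n).powerset, P G → Q G) :
    probH3 n p P ≤ probH3 n p Q := by
  rw [probH3_eq, probH3_eq]
  apply Finset.sum_le_sum
  intro G hG
  by_cases hP : P G
  · rw [if_pos hP, if_pos (h G hG hP)]
  · rw [if_neg hP]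
    split
    · exact wt_nonneg hp0 hp1 G
    · exact le_refl _

open Classical in
lemma probH3_false : probH3 n p (fun _ => False) = 0 := by
  rw [probH3_eq]
  simp

open Classical in
lemma probH3_nonneg (hp0 : 0 ≤ p) (hp1 : p ≤ 1) (P : Finset (Finset (Fin n)) → Prop) :
    0 ≤ probH3 n p P := by
  rw [probH3_eq]
  apply Finset.sum_nonneg
  intro G hG
  split
  · exact wt_nonneg hp0 hp1 G
  · exact le_refl _

open Classical in
lemma probH3_compl (hp0 : 0 ≤ p) (hp1 : p ≤ 1) (P : Finset (Finset (Fin n)) → Prop) :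
    probH3 n p P = 1 - probH3 n p (fun G => ¬ P G) := by
  have : probH3 n p P + probH3 n p (fun G => ¬ P G) = 1 := by
    rw [probH3_eq, probH3_eq, ← Finset.sum_add_distrib, ← sum_wt_eq_one (n := n) hp0 hp1]
    apply Finset.sum_congr rfl
    intro G _
    by_cases hP : P G <;> simp [hP]
  linarith

open Classical in
lemma probH3_or (hp0 : 0 ≤ p) (hp1 : p ≤ 1) (P Q : Finset (Finset (Fin n)) → Prop) :
    probH3 n p (fun G => P G ∨ Q G) ≤ probH3 n p P + probH3 n p Q := by
  rw [probH3_eq, probH3_eq, probH3_eq, ← Finset.sum_add_distrib]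
  apply Finset.sum_le_sum
  intro G hG
  have := wt_nonneg (n := n) hp0 hp1 G
  by_cases hP : P G
  · by_cases hQ : Q G <;> simp [hP, hQ] <;> linarith
  · by_cases hQ : Q G <;> simp [hP, hQ] <;> linarith

open Classical in
lemma probH3_union_bound {ι : Type*} (hp0 : 0 ≤ p) (hp1 : p ≤ 1)
    (s : Finset ι) (P : Finset (Finset (Fin n)) → Prop)
    (Q : ι → Finset (Finset (Fin n)) → Prop)
    (h : ∀ G ∈ (triples n).powerset, P G → ∃ i ∈ s, Q i G) :
    probH3 n p P ≤ ∑ i ∈ s, probH3 n p (Q i) := by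
  simp only [probH3_eq]
  rw [Finset.sum_comm]
  apply Finset.sum_le_sum
  intro G hG
  have hwt := wt_nonneg (n := n) hp0 hp1 G
  by_cases hP : P G
  · rw [if_pos hP]
    obtain ⟨i, hi, hQ⟩ := h G hG hP
    calc wt n p G = if Q i G then wt n p G else 0 := by rw [if_pos hQ]
      _ ≤ ∑ j ∈ s, if Q j G then wt n p G else 0 :=
          Finset.single_le_sum (f := fun j => if Q j G then wt n p G else 0)
            (fun j _ => by beta_reduce; split; exacts [hwt, le_refl _]) hi
  · rw [if_neg hP]
    apply Finset.sum_nonneg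
    intro j _
    split; exacts [hwt, le_refl _]

open Classical in
lemma probH3_le_expect (hp0 : 0 ≤ p) (hp1 : p ≤ 1) (P : Finset (Finset (Fin n)) → Prop)
    (f : Finset (Finset (Fin n)) → ℝ) (h0 : ∀ G, 0 ≤ f G)
    (h1 : ∀ G ∈ (triples n).powerset, P G → 1 ≤ f G) :
    probH3 n p P ≤ ∑ G ∈ (triples n).powerset, wt n p G * f G := by
  rw [probH3_eq]
  apply Finset.sum_le_sum
  intro G hG
  have hwt := wt_nonneg (n := n) hp0 hp1 G
  split
  · exact le_mul_of_one_le_right hwt (h1 G hG ‹_›)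
  · exact mul_nonneg hwt (h0 G)

/-- weight of a triple `T`: the number of ordered triples in `X ×ˢ Y ×ˢ univ`
whose underlying set is `T`. -/
def tw (n : ℕ) (X Y : Finset (Fin n)) (T : Finset (Fin n)) : ℕ :=
  ((X ×ˢ Y ×ˢ (Finset.univ : Finset (Fin n))).filter
    fun t => ({t.1, t.2.1, t.2.2} : Finset (Fin n)) = T).card

lemma tcount_eq_sum {G : Finset (Finset (Fin n))} (hG : G ∈ (triples n).powerset)
    (X Y : Finset (Fin n)) :
    tripleCount G X Y Finset.univ = ∑ T ∈ triples n, if T ∈ G then tw n X Y T else 0 := by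
  classical
  have hG' := Finset.mem_powerset.mp hG
  rw [Finset.sum_ite_mem, Finset.inter_eq_right.mpr hG']
  unfold tripleCount
  have key := Finset.card_eq_sum_card_fiberwise
    (s := (X ×ˢ Y ×ˢ (Finset.univ : Finset (Fin n))).filter
      fun t => ({t.1, t.2.1, t.2.2} : Finset (Fin n)) ∈ G)
    (f := fun t => ({t.1, t.2.1, t.2.2} : Finset (Fin n))) (t := G)
    (fun t ht => (Finset.mem_filter.mp ht).2)
  rw [key]
  apply Finset.sum_congr rfl
  intro T hT
  unfold tw
  rw [Finset.filter_filter]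
  refine congrArg Finset.card (Finset.filter_congr ?_)
  intro t _
  constructor
  · exact fun h => h.2
  · exact fun h => ⟨h ▸ hT, h⟩

lemma tw_le {T : Finset (Fin n)} (hT : T ∈ triples n) (X Y : Finset (Fin n)) :
    tw n X Y T ≤ 27 := by
  have hT3 : T.card = 3 := (Finset.mem_powersetCard.mp hT).2
  have hsub : ((X ×ˢ Y ×ˢ (Finset.univ : Finset (Fin n))).filter
      fun t => ({t.1, t.2.1, t.2.2} : Finset (Fin n)) = T) ⊆ T ×ˢ T ×ˢ T := by
    intro t ht
    have h2 := (Finset.mem_filter.mp ht).2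
    simp only [Finset.mem_product]
    refine ⟨?_, ?_, ?_⟩ <;>
    · rw [← h2]; simp
  calc tw n X Y T ≤ (T ×ˢ T ×ˢ T).card := Finset.card_le_card hsub
    _ = 27 := by simp [Finset.card_product, hT3]

lemma sum_tw_le (X Y : Finset (Fin n)) :
    ∑ T ∈ triples n, tw n X Y T ≤ X.card * Y.card * n := by
  classical
  set s := (X ×ˢ Y ×ˢ (Finset.univ : Finset (Fin n))).filter
    (fun t => ({t.1, t.2.1, t.2.2} : Finset (Fin n)) ∈ triples n) with hs
  have h1 : ∑ T ∈ triples n, tw n X Y T = s.card := by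
    have key := Finset.card_eq_sum_card_fiberwise
      (s := s)
      (f := fun t => ({t.1, t.2.1, t.2.2} : Finset (Fin n))) (t := triples n)
      (fun t ht => (Finset.mem_filter.mp ht).2)
    rw [key]
    apply Finset.sum_congr rfl
    intro T hT
    unfold tw
    rw [hs, Finset.filter_filter]
    refine congrArg Finset.card (Finset.filter_congr ?_).symm
    intro t _
    constructor
    · exact fun h => h.2
    · exact fun h => ⟨h ▸ hT, h⟩
  rw [h1]
  calc s.card ≤ (X ×ˢ Y ×ˢ (Finset.univ : Finset (Fin n))).card :=
      Finset.card_le_card (Finset.filter_subset _ _)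
    _ = X.card * Y.card * n := by
      simp [Finset.card_product, mul_assoc]

lemma nonempty_of_tcount_pos {G : Finset (Finset (Fin n))} {X Y : Finset (Fin n)}
    (h : 0 < tripleCount G X Y Finset.univ) : X.Nonempty ∧ Y.Nonempty := by
  obtain ⟨t, ht⟩ := Finset.card_pos.mp h
  have := (Finset.mem_filter.mp ht).1
  simp only [Finset.mem_product] at this
  exact ⟨⟨t.1, this.1⟩, ⟨t.2.1, this.2.1⟩⟩
lemma chord_aux {w l : ℝ} (hw0 : 0 ≤ w) (hw : w ≤ 27) (hl : 0 ≤ l) :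
    Real.exp (l * w) ≤ 1 + w / 27 * (Real.exp (27 * l) - 1) := by
  have h := convexOn_exp.2 (Set.mem_univ (0 : ℝ)) (Set.mem_univ (27 * l))
    (show (0:ℝ) ≤ 1 - w / 27 by linarith) (show (0:ℝ) ≤ w / 27 by positivity)
    (show 1 - w / 27 + w / 27 = 1 by ring)
  simp only [smul_eq_mul, mul_zero, zero_add, Real.exp_zero, mul_one] at h
  have he : w / 27 * (27 * l) = l * w := by ring
  rw [he] at h
  linarith

lemma exp_le_one_add_two_mul {t : ℝ} (ht0 : 0 ≤ t) (ht1 : t ≤ 1) :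
    Real.exp t ≤ 1 + 2 * t := by
  have h := convexOn_exp.2 (Set.mem_univ (0 : ℝ)) (Set.mem_univ (1 : ℝ))
    (show (0:ℝ) ≤ 1 - t by linarith) ht0 (show 1 - t + t = 1 by ring)
  simp only [smul_eq_mul, mul_zero, zero_add, Real.exp_zero, mul_one] at h
  nlinarith [Real.exp_one_lt_d9]

lemma chord {p w l : ℝ} (hp0 : 0 ≤ p) (hp1 : p ≤ 1) (hw0 : 0 ≤ w) (hw : w ≤ 27)
    (hl : 0 ≤ l) :
    p * Real.exp (l * w) + (1 - p) ≤ Real.exp (p * w * (Real.exp (27 * l) - 1) / 27) := by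
  have h1 := chord_aux hw0 hw hl
  have h2 : p * Real.exp (l * w) ≤ p * (1 + w / 27 * (Real.exp (27 * l) - 1)) :=
    mul_le_mul_of_nonneg_left h1 hp0
  have h3 := Real.add_one_le_exp (p * w * (Real.exp (27 * l) - 1) / 27)
  nlinarith

open Classical in
lemma chernoff (hp0 : 0 ≤ p) (hp1 : p ≤ 1) (X Y : Finset (Fin n)) {l : ℝ} (hl : 0 ≤ l)
    (t : ℝ) :
    probH3 n p (fun G => t ≤ (tripleCount G X Y Finset.univ : ℝ)) ≤
      Real.exp (p * (X.card * Y.card * n) * (Real.exp (27 * l) - 1) / 27 - l * t) := by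
  have he27 : (0:ℝ) ≤ Real.exp (27 * l) - 1 := by
    have : (1:ℝ) ≤ Real.exp (27 * l) := Real.one_le_exp (by positivity)
    linarith
  -- step 1: Markov / exponential moment
  have step1 : probH3 n p (fun G => t ≤ (tripleCount G X Y Finset.univ : ℝ)) ≤
      ∑ G ∈ (triples n).powerset,
        wt n p G * (Real.exp (-(l * t)) *
          Real.exp (l * (tripleCount G X Y Finset.univ : ℝ))) := by
    apply probH3_le_expect hp0 hp1
    · intro G; positivity
    · intro G _ hP
      rw [← Real.exp_add]
      apply Real.one_le_exp
      nlinarith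
  -- step 2: factor the constant and compute the MGF
  have step2 : ∀ G ∈ (triples n).powerset,
      Real.exp (l * (tripleCount G X Y Finset.univ : ℝ)) =
        ∏ T ∈ G, Real.exp (l * (tw n X Y T : ℝ)) := by
    intro G hG
    have hG' := Finset.mem_powerset.mp hG
    have : l * (tripleCount G X Y Finset.univ : ℝ) = ∑ T ∈ G, l * (tw n X Y T : ℝ) := by
      rw [tcount_eq_sum hG X Y]
      push_cast
      rw [Finset.mul_sum]
      simp only [mul_ite, mul_zero]
      rw [Finset.sum_ite_mem, Finset.inter_eq_right.mpr hG']
    rw [this, Real.exp_sum]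
  have step3 : ∑ G ∈ (triples n).powerset,
      wt n p G * ∏ T ∈ G, Real.exp (l * (tw n X Y T : ℝ)) =
      ∏ T ∈ triples n, (p * Real.exp (l * (tw n X Y T : ℝ)) + (1 - p)) :=
    mgf _
  have step4 : ∏ T ∈ triples n, (p * Real.exp (l * (tw n X Y T : ℝ)) + (1 - p)) ≤
      Real.exp (p * (X.card * Y.card * n) * (Real.exp (27 * l) - 1) / 27) := by
    calc ∏ T ∈ triples n, (p * Real.exp (l * (tw n X Y T : ℝ)) + (1 - p))
        ≤ ∏ T ∈ triples n,
          Real.exp (p * (tw n X Y T : ℝ) * (Real.exp (27 * l) - 1) / 27) := by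
          apply Finset.prod_le_prod
          · intro T _
            have := Real.exp_pos (l * (tw n X Y T : ℝ))
            nlinarith
          · intro T hT
            exact chord hp0 hp1 (by positivity)
              (by exact_mod_cast tw_le hT X Y) hl
      _ = Real.exp (∑ T ∈ triples n, p * (tw n X Y T : ℝ) * (Real.exp (27 * l) - 1) / 27) :=
          (Real.exp_sum _ _).symm
      _ ≤ Real.exp (p * (X.card * Y.card * n) * (Real.exp (27 * l) - 1) / 27) := by
          rw [Real.exp_le_exp]
          have hsum : ∑ T ∈ triples n, p * (tw n X Y T : ℝ) * (Real.exp (27 * l) - 1) / 27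
              = p * (∑ T ∈ triples n, (tw n X Y T : ℝ)) * (Real.exp (27 * l) - 1) / 27 := by
            rw [Finset.mul_sum, Finset.sum_mul, Finset.sum_div]
          rw [hsum]
          have hS : (∑ T ∈ triples n, (tw n X Y T : ℝ)) ≤ (X.card : ℝ) * Y.card * n := by
            have := sum_tw_le X Y
            push_cast
            exact_mod_cast this
          have hcast : ((X.card : ℝ) * Y.card * n) = ((X.card * Y.card * n : ℕ) : ℝ) := by
            push_cast; ring
          nlinarith [mul_nonneg hp0 he27, Finset.sum_nonneg
            (fun T (_ : T ∈ triples n) => by positivity : ∀ T ∈ triples n, (0:ℝ) ≤ (tw n X Y T : ℝ))]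
  calc probH3 n p (fun G => t ≤ (tripleCount G X Y Finset.univ : ℝ))
      ≤ ∑ G ∈ (triples n).powerset,
        wt n p G * (Real.exp (-(l * t)) *
          Real.exp (l * (tripleCount G X Y Finset.univ : ℝ))) := step1
    _ = Real.exp (-(l * t)) * ∑ G ∈ (triples n).powerset,
          wt n p G * ∏ T ∈ G, Real.exp (l * (tw n X Y T : ℝ)) := by
        rw [Finset.mul_sum]
        apply Finset.sum_congr rfl
        intro G hG
        rw [step2 G hG]; ring
    _ ≤ Real.exp (-(l * t)) *
          Real.exp (p * (X.card * Y.card * n) * (Real.exp (27 * l) - 1) / 27) := by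
        rw [step3]
        exact mul_le_mul_of_nonneg_left step4 (Real.exp_pos _).le
    _ = Real.exp (p * (X.card * Y.card * n) * (Real.exp (27 * l) - 1) / 27 - l * t) := by
        rw [← Real.exp_add]; ring_nf

lemma log_one_add_lb {ε : ℝ} (h0 : 0 < ε) (h1 : ε ≤ 1/5) :
    ε + ε^2/5 ≤ (1+ε) * Real.log (1+ε) := by
  have hx : (0:ℝ) < 1 + ε/2 := by linarith
  have hy : (0:ℝ) < 1 + ε := by linarith
  set A := Real.log (1 + ε/2) with hA
  set B := Real.log ((1+ε)/(1+ε/2)) with hB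
  have hsplit : Real.log (1+ε) = A + B := by
    rw [hA, hB, ← Real.log_mul hx.ne' (by positivity)]
    congr 1
    field_simp
  have hAub : A ≤ ε/2 := by
    have := Real.log_le_sub_one_of_pos hx
    linarith
  have hAlb : ε/2 ≤ (1 + ε/2) * A := by
    have h := Real.log_le_sub_one_of_pos (inv_pos.mpr hx)
    rw [Real.log_inv] at h
    have h2 : 1 - (1 + ε/2)⁻¹ ≤ A := by linarith
    have h3 : (1 + ε/2) * (1 - (1 + ε/2)⁻¹) ≤ (1 + ε/2) * A :=
      mul_le_mul_of_nonneg_left h2 hx.le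
    rw [mul_sub, mul_inv_cancel₀ hx.ne'] at h3
    linarith
  have hBlb : (0:ℝ) ≤ B := Real.log_nonneg (by rw [le_div_iff₀ hx]; linarith)
  have hB2 : ε/2 ≤ (1+ε) * B := by
    have h := Real.log_le_sub_one_of_pos (show (0:ℝ) < (1+ε/2)/(1+ε) by positivity)
    have hlog : Real.log ((1+ε/2)/(1+ε)) = -B := by
      rw [hB, ← Real.log_inv, inv_div]
    rw [hlog] at h
    have h2 : 1 - (1+ε/2)/(1+ε) ≤ B := by linarith
    have h3 : (1+ε) * (1 - (1+ε/2)/(1+ε)) ≤ (1+ε) * B :=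
      mul_le_mul_of_nonneg_left h2 hy.le
    have h4 : (1+ε) * ((1+ε/2)/(1+ε)) = 1+ε/2 := by field_simp
    rw [mul_sub, mul_one, h4] at h3
    linarith
  -- A ≥ ε/2 - ε²/4
  have hA2 : ε/2 - ε^2/4 ≤ A := by nlinarith
  rw [hsplit]
  have hEA := mul_le_mul_of_nonneg_left hA2 h0.le
  nlinarith

lemma zpow_neg_three {ε : ℝ} : ε ^ (-3 : ℤ) = (ε⁻¹)^3 := by
  rw [zpow_neg, inv_pow]
  norm_cast

lemma zpow_neg_four {ε : ℝ} : ε ^ (-4 : ℤ) = (ε⁻¹)^4 := by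
  rw [zpow_neg, inv_pow]
  norm_cast

open Classical in
lemma case_i {ε : ℝ} (hε0 : 0 < ε) (hε : ε < 1/300) (hn : 1 ≤ n)
    (hp0 : 0 ≤ p) (hp1 : p ≤ 1) (X Y : Finset (Fin n)) (hX : X.Nonempty) :
    probH3 n p (fun G =>
      (Y.card ≤ X.card ∧ (X.card : ℝ) ≤ ε ^ (-3 : ℤ) * Real.log n / (n * p)) ∧
        ε ^ (-4 : ℤ) * X.card * Real.log n < (tripleCount G X Y Finset.univ : ℝ)) ≤
    Real.exp (-(11/10) * ((X.card : ℝ) + Y.card) * Real.log n) := by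
  set L := Real.log n with hLdef
  have hL : 0 ≤ L := Real.log_nonneg (by exact_mod_cast hn)
  by_cases hc : Y.card ≤ X.card ∧ (X.card : ℝ) ≤ ε ^ (-3 : ℤ) * L / (n * p)
  · set u := ε⁻¹ with hu_def
    have hu0 : 0 < u := inv_pos.mpr hε0
    have hu : 300 < u := by
      rw [hu_def, show ε⁻¹ = 1/ε from (one_div ε).symm, lt_div_iff₀ hε0]; linarith
    have h3 : ε ^ (-3:ℤ) = u^3 := zpow_neg_three
    have h4 : ε ^ (-4:ℤ) = u^4 := zpow_neg_four
    clear_value L u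
    have hx1 : (1:ℝ) ≤ (X.card : ℝ) := by exact_mod_cast hX.card_pos
    have hy : (Y.card : ℝ) ≤ (X.card : ℝ) := by exact_mod_cast hc.1
    have hy0 : (0:ℝ) ≤ (Y.card : ℝ) := by positivity
    have hnp : 0 < (n:ℝ) * p := by
      rcases (by positivity : (0:ℝ) ≤ (n:ℝ) * p).lt_or_eq with h | h
      · exact h
      · exfalso
        have h2 := hc.2
        rw [← h, div_zero] at h2
        linarith
    have hxnp : (X.card : ℝ) * ((n:ℝ)*p) ≤ u^3 * L := by
      have h2 := hc.2
      rw [h3] at h2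
      exact (le_div_iff₀ hnp).mp h2
    have hmono : probH3 n p (fun G =>
        (Y.card ≤ X.card ∧ (X.card : ℝ) ≤ ε ^ (-3 : ℤ) * L / (n * p)) ∧
          ε ^ (-4 : ℤ) * X.card * L < (tripleCount G X Y Finset.univ : ℝ)) ≤
        probH3 n p (fun G => u^4 * X.card * L ≤ (tripleCount G X Y Finset.univ : ℝ)) := by
      apply probH3_mono hp0 hp1
      intro G _ hb
      rw [← h4]
      exact hb.2.le
    refine hmono.trans ((chernoff hp0 hp1 X Y
      (l := Real.log 2 / 27) (by positivity) _).trans ?_)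
    rw [Real.exp_le_exp]
    have he : Real.exp (27 * (Real.log 2 / 27)) = 2 := by
      rw [show (27:ℝ) * (Real.log 2 / 27) = Real.log 2 by ring, Real.exp_log]
      norm_num
    rw [he]
    have hlog2 : ((6931/10000:ℝ)) ≤ Real.log 2 := by
      have := Real.log_two_gt_d9; norm_num at this ⊢; linarith
    -- arithmetic
    have hxL : (0:ℝ) ≤ (X.card : ℝ) * L := by positivity
    have c1 : p * ((X.card : ℝ) * Y.card * n) * (2 - 1) / 27 ≤ u^3 * L * X.card / 27 := by
      have e1 : p * ((X.card : ℝ) * Y.card * n) = ((X.card : ℝ) * ((n:ℝ)*p)) * Y.card := by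
        ring
      have e2 : ((X.card : ℝ) * ((n:ℝ)*p)) * Y.card ≤ (u^3 * L) * Y.card :=
        mul_le_mul_of_nonneg_right hxnp hy0
      have e3 : (u^3 * L) * Y.card ≤ (u^3 * L) * X.card :=
        mul_le_mul_of_nonneg_left hy (by positivity)
      rw [e1]
      linarith
    have hu3 : (300:ℝ)^3 < u^3 := by
      apply pow_lt_pow_left₀ hu (by norm_num) (by norm_num)
    have h300 : 300 * u^3 < u^4 := by
      calc 300 * u^3 < u * u^3 := mul_lt_mul_of_pos_right hu (by positivity)
        _ = u^4 := by ring
    have coeff : 11/5 + u^3/27 ≤ (6931/10000) * u^4 / 27 := by norm_num at hu3 ⊢; linarith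
    have hmul := mul_le_mul_of_nonneg_right coeff hxL
    have hlast : (Real.log 2 / 27) * (u^4 * X.card * L) ≥
        ((6931/10000) / 27) * (u^4 * X.card * L) := by
      apply mul_le_mul_of_nonneg_right (by linarith) (by positivity)
    have hyx : (11/10) * ((X.card : ℝ) + Y.card) * L ≤ (11/5) * ((X.card : ℝ) * L) := by
      have hyL := mul_le_mul_of_nonneg_right hy hL
      linarith
    linarith [hmul, hlast, c1, hyx]
  · have h0 : probH3 n p (fun G =>
        (Y.card ≤ X.card ∧ (X.card : ℝ) ≤ ε ^ (-3 : ℤ) * L / (n * p)) ∧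
          ε ^ (-4 : ℤ) * X.card * L < (tripleCount G X Y Finset.univ : ℝ)) ≤
        probH3 n p (fun _ => False) :=
      probH3_mono hp0 hp1 (fun G _ hb => hc hb.1)
    rw [probH3_false] at h0
    exact h0.trans (Real.exp_pos _).le

open Classical in
lemma case_ii {ε : ℝ} (hε0 : 0 < ε) (hε : ε < 1/300) (hn : 1 ≤ n)
    (hp0 : 0 ≤ p) (hp1 : p ≤ 1) (X Y : Finset (Fin n)) :
    probH3 n p (fun G =>
      (ε ^ (-3 : ℤ) * Real.log n / (n * p) ≤ (X.card : ℝ) ∧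
        ε ^ (-3 : ℤ) * Real.log n / (n * p) ≤ (Y.card : ℝ)) ∧
      (1 + ε) * X.card * Y.card * n * p < (tripleCount G X Y Finset.univ : ℝ)) ≤
    Real.exp (-(11/10) * ((X.card : ℝ) + Y.card) * Real.log n) := by
  set L := Real.log n with hLdef
  have hL : 0 ≤ L := Real.log_nonneg (by exact_mod_cast hn)
  have hx0 : (0:ℝ) ≤ (X.card : ℝ) := by positivity
  have hy0 : (0:ℝ) ≤ (Y.card : ℝ) := by positivity
  rcases (by positivity : (0:ℝ) ≤ (n:ℝ) * p).lt_or_eq with hnp | hnp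
  · -- np > 0 branch
    by_cases hc : ε ^ (-3 : ℤ) * L / (n * p) ≤ (X.card : ℝ) ∧
        ε ^ (-3 : ℤ) * L / (n * p) ≤ (Y.card : ℝ)
    · set u := ε⁻¹ with hu_def
      have hu0 : 0 < u := inv_pos.mpr hε0
      have hu : 300 < u := by
        rw [hu_def, show ε⁻¹ = 1/ε from (one_div ε).symm, lt_div_iff₀ hε0]; linarith
      have h3 : ε ^ (-3:ℤ) = u^3 := zpow_neg_three
      have hu3e : u^3 * ε^2 = u := by
        rw [hu_def]
        field_simp
      clear_value L u
      have hxnp : u^3 * L ≤ (X.card : ℝ) * ((n:ℝ)*p) := by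
        have := hc.1; rw [h3] at this
        exact (div_le_iff₀ hnp).mp this
      have hynp : u^3 * L ≤ (Y.card : ℝ) * ((n:ℝ)*p) := by
        have := hc.2; rw [h3] at this
        exact (div_le_iff₀ hnp).mp this
      have hl0 : 0 ≤ Real.log (1+ε) / 27 := by
        have : 0 ≤ Real.log (1+ε) := Real.log_nonneg (by linarith)
        linarith
      have hmono : probH3 n p (fun G =>
          (ε ^ (-3 : ℤ) * L / (n * p) ≤ (X.card : ℝ) ∧
            ε ^ (-3 : ℤ) * L / (n * p) ≤ (Y.card : ℝ)) ∧
          (1 + ε) * X.card * Y.card * n * p < (tripleCount G X Y Finset.univ : ℝ)) ≤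
          probH3 n p (fun G =>
            (1 + ε) * X.card * Y.card * n * p ≤ (tripleCount G X Y Finset.univ : ℝ)) :=
        probH3_mono hp0 hp1 (fun G _ hb => hb.2.le)
      refine hmono.trans ((chernoff hp0 hp1 X Y (l := Real.log (1+ε) / 27) hl0 _).trans ?_)
      rw [Real.exp_le_exp]
      have he : Real.exp (27 * (Real.log (1+ε) / 27)) = 1 + ε := by
        rw [show (27:ℝ) * (Real.log (1+ε) / 27) = Real.log (1+ε) by ring,
          Real.exp_log (by linarith)]
      rw [he]
      have hD := log_one_add_lb hε0 (by linarith)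
      have hc0 : (0:ℝ) ≤ (X.card : ℝ) * Y.card * n * p :=
        mul_nonneg (by positivity) hp0
      have hkey : ε - (1+ε) * Real.log (1+ε) ≤ -(ε^2/5) := by linarith
      have h2 : ((X.card : ℝ) * Y.card * n * p) * (ε - (1+ε) * Real.log (1+ε)) ≤
          ((X.card : ℝ) * Y.card * n * p) * (-(ε^2/5)) :=
        mul_le_mul_of_nonneg_left hkey hc0
      have h3' : ((X.card : ℝ) + Y.card) * (u^3 * L) ≤
          2 * ((X.card : ℝ) * Y.card * n * p) := by
        have a1 : (X.card : ℝ) * (u^3*L) ≤ (X.card : ℝ) * ((Y.card : ℝ) * ((n:ℝ)*p)) :=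
          mul_le_mul_of_nonneg_left hynp hx0
        have a2 : (Y.card : ℝ) * (u^3*L) ≤ (Y.card : ℝ) * ((X.card : ℝ) * ((n:ℝ)*p)) :=
          mul_le_mul_of_nonneg_left hxnp hy0
        linarith [a1, a2]
      have h4 := mul_le_mul_of_nonneg_right h3' (sq_nonneg ε)
      have e5 : ((X.card : ℝ) + Y.card) * (u^3 * L) * ε^2 =
          ((X.card : ℝ) + Y.card) * (u * L) := by
        linear_combination (((X.card : ℝ) + Y.card) * L) * hu3e
      rw [e5] at h4
      have h6 : 300 * (((X.card : ℝ) + Y.card) * L) ≤ ((X.card : ℝ) + Y.card) * (u * L) := by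
        have := mul_le_mul_of_nonneg_right hu.le
          (show (0:ℝ) ≤ ((X.card : ℝ) + Y.card) * L by positivity)
        linarith [this]
      have egoal : p * ((X.card : ℝ) * Y.card * n) * ((1 + ε) - 1) / 27 -
          Real.log (1+ε) / 27 * ((1 + ε) * X.card * Y.card * n * p) =
          ((X.card : ℝ) * Y.card * n * p) * (ε - (1+ε) * Real.log (1+ε)) / 27 := by
        ring
      rw [egoal]
      have s1 : 150*(((X.card : ℝ) + Y.card)*L) ≤ (X.card : ℝ)*Y.card*n*p*ε^2 := by
        linarith
      have s2 : (X.card : ℝ)*Y.card*n*p*(ε - (1+ε)*Real.log (1+ε)) ≤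
          -30*(((X.card : ℝ) + Y.card)*L) := by linarith
      have hxyL : (0:ℝ) ≤ ((X.card : ℝ) + Y.card) * L := by positivity
      linarith [s2, hxyL]
    · have h0 : probH3 n p (fun G =>
          (ε ^ (-3 : ℤ) * L / (n * p) ≤ (X.card : ℝ) ∧
            ε ^ (-3 : ℤ) * L / (n * p) ≤ (Y.card : ℝ)) ∧
          (1 + ε) * X.card * Y.card * n * p < (tripleCount G X Y Finset.univ : ℝ)) ≤
          probH3 n p (fun _ => False) :=
        probH3_mono hp0 hp1 (fun G _ hb => hc hb.1)
      rw [probH3_false] at h0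
      exact h0.trans (Real.exp_pos _).le
  · -- np = 0, so p = 0
    have hn0 : (0:ℝ) < (n:ℝ) := by exact_mod_cast hn
    have hp_zero : p = 0 := by
      rcases mul_eq_zero.mp hnp.symm with h | h
      · exact absurd h hn0.ne'
      · exact h
    have hl0 : 0 ≤ (11/10) * ((X.card : ℝ) + Y.card) * L :=
      mul_nonneg (mul_nonneg (by norm_num) (add_nonneg hx0 hy0)) hL
    have hmono : probH3 n p (fun G =>
        (ε ^ (-3 : ℤ) * L / (n * p) ≤ (X.card : ℝ) ∧
          ε ^ (-3 : ℤ) * L / (n * p) ≤ (Y.card : ℝ)) ∧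
        (1 + ε) * X.card * Y.card * n * p < (tripleCount G X Y Finset.univ : ℝ)) ≤
        probH3 n p (fun G => (1:ℝ) ≤ (tripleCount G X Y Finset.univ : ℝ)) := by
      apply probH3_mono hp0 hp1
      intro G _ hb
      have h2 := hb.2
      rw [hp_zero] at h2
      have h2' : (0:ℝ) < (tripleCount G X Y Finset.univ : ℝ) := by
        have : (1 + ε) * (X.card : ℝ) * Y.card * n * 0 = 0 := by ring
        rw [this] at h2
        exact h2
      exact_mod_cast Nat.one_le_iff_ne_zero.mpr (by exact_mod_cast h2'.ne')
    refine hmono.trans ((chernoff hp0 hp1 X Y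
      (l := (11/10) * ((X.card : ℝ) + Y.card) * L) hl0 1).trans ?_)
    apply le_of_eq
    congr 1
    rw [hp_zero]
    ring

lemma sum_sne_le (hn : 1 ≤ n) :
    ∑ X ∈ (Finset.univ : Finset (Fin n)).powerset.filter (fun s => s.Nonempty),
      Real.exp (-(11/10) * (X.card : ℝ) * Real.log n) ≤
    2 * Real.exp (-(1/10) * Real.log n) := by
  classical
  set L := Real.log n with hLdef
  have hn' : (0:ℝ) < (n:ℝ) := by exact_mod_cast hn
  have hL : 0 ≤ L := Real.log_nonneg (by exact_mod_cast hn)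
  set q := Real.exp (-(11/10) * L) with hq
  have hq0 : 0 ≤ q := (Real.exp_pos _).le
  have hterm : ∀ X : Finset (Fin n), Real.exp (-(11/10) * (X.card : ℝ) * L) = q ^ X.card := by
    intro X
    rw [hq, ← Real.exp_nat_mul]
    congr 1
    ring
  have hsum_all : ∑ X ∈ (Finset.univ : Finset (Fin n)).powerset, q ^ X.card = (q+1)^n := by
    have h := Finset.prod_add (fun _ : Fin n => q) (fun _ => (1:ℝ)) Finset.univ
    simp only [Finset.prod_const, one_pow, mul_one, Finset.card_univ,
      Fintype.card_fin] at h
    rw [← h]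
  have hnot : ∑ X ∈ (Finset.univ : Finset (Fin n)).powerset.filter
      (fun s => ¬ s.Nonempty), q ^ X.card = 1 := by
    have hfilt : (Finset.univ : Finset (Fin n)).powerset.filter (fun s => ¬ s.Nonempty)
        = {∅} := by
      ext s
      simp [Finset.not_nonempty_iff_eq_empty]
    rw [hfilt]
    simp
  have hsplit := Finset.sum_filter_add_sum_filter_not
    (Finset.univ : Finset (Fin n)).powerset (fun s => s.Nonempty) (fun X => q ^ X.card)
  have hsne : ∑ X ∈ (Finset.univ : Finset (Fin n)).powerset.filter (fun s => s.Nonempty),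
      q ^ X.card = (q+1)^n - 1 := by
    rw [← hsum_all]
    linarith [hsplit, hnot]
  have hnq : (n:ℝ) * q = Real.exp (-(1/10) * L) := by
    nth_rewrite 1 [show (n:ℝ) = Real.exp L from (Real.exp_log hn').symm]
    rw [hq, ← Real.exp_add]
    congr 1
    ring
  have hnq1 : (n:ℝ) * q ≤ 1 := by
    rw [hnq]
    exact Real.exp_le_one_iff.mpr (by nlinarith)
  have hnq0 : 0 ≤ (n:ℝ) * q := by positivity
  have hpow : (q+1)^n ≤ Real.exp ((n:ℝ) * q) := by
    calc (q+1)^n ≤ (Real.exp q)^n := by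
          apply pow_le_pow_left₀ (by linarith)
          linarith [Real.add_one_le_exp q]
      _ = Real.exp ((n:ℝ) * q) := (Real.exp_nat_mul _ _).symm
  have hfin : Real.exp ((n:ℝ) * q) ≤ 1 + 2 * ((n:ℝ)*q) := exp_le_one_add_two_mul hnq0 hnq1
  calc ∑ X ∈ (Finset.univ : Finset (Fin n)).powerset.filter (fun s => s.Nonempty),
        Real.exp (-(11/10) * (X.card : ℝ) * L)
      = ∑ X ∈ (Finset.univ : Finset (Fin n)).powerset.filter (fun s => s.Nonempty),
        q ^ X.card := by
        apply Finset.sum_congr rfl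
        intro X _
        exact hterm X
    _ = (q+1)^n - 1 := hsne
    _ ≤ 2 * ((n:ℝ) * q) := by linarith
    _ = 2 * Real.exp (-(1/10) * L) := by rw [hnq]

open Classical in
lemma global_bound {ε : ℝ} (hε0 : 0 < ε) (hε : ε < 1/300) (hn : 1 ≤ n)
    (hp0 : 0 ≤ p) (hp1 : p ≤ 1) :
    1 - 8 * Real.exp (-(1/5) * Real.log n) ≤ probH3 n p (fun G =>
      ∀ X Y : Finset (Fin n),
        ((Y.card ≤ X.card ∧ (X.card : ℝ) ≤ ε ^ (-3 : ℤ) * Real.log n / (n * p)) →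
          (tripleCount G X Y Finset.univ : ℝ) ≤ ε ^ (-4 : ℤ) * X.card * Real.log n) ∧
        ((ε ^ (-3 : ℤ) * Real.log n / (n * p) ≤ (X.card : ℝ) ∧
            ε ^ (-3 : ℤ) * Real.log n / (n * p) ≤ (Y.card : ℝ)) →
          (tripleCount G X Y Finset.univ : ℝ) ≤ (1 + ε) * X.card * Y.card * n * p)) := by
  have hL : (0:ℝ) ≤ Real.log n := Real.log_nonneg (by exact_mod_cast hn)
  set f : Finset (Fin n) → ℝ :=
    fun X => Real.exp (-(11/10) * (X.card : ℝ) * Real.log n) with hf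
  set sne := (Finset.univ : Finset (Fin n)).powerset.filter (fun s => s.Nonempty) with hsne
  have key : probH3 n p (fun G => ¬ (∀ X Y : Finset (Fin n),
      ((Y.card ≤ X.card ∧ (X.card : ℝ) ≤ ε ^ (-3 : ℤ) * Real.log n / (n * p)) →
        (tripleCount G X Y Finset.univ : ℝ) ≤ ε ^ (-4 : ℤ) * X.card * Real.log n) ∧
      ((ε ^ (-3 : ℤ) * Real.log n / (n * p) ≤ (X.card : ℝ) ∧
          ε ^ (-3 : ℤ) * Real.log n / (n * p) ≤ (Y.card : ℝ)) →
        (tripleCount G X Y Finset.univ : ℝ) ≤ (1 + ε) * X.card * Y.card * n * p)))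
      ≤ 8 * Real.exp (-(1/5) * Real.log n) := by
    calc probH3 n p (fun G => ¬ (∀ X Y : Finset (Fin n),
        ((Y.card ≤ X.card ∧ (X.card : ℝ) ≤ ε ^ (-3 : ℤ) * Real.log n / (n * p)) →
          (tripleCount G X Y Finset.univ : ℝ) ≤ ε ^ (-4 : ℤ) * X.card * Real.log n) ∧
        ((ε ^ (-3 : ℤ) * Real.log n / (n * p) ≤ (X.card : ℝ) ∧
            ε ^ (-3 : ℤ) * Real.log n / (n * p) ≤ (Y.card : ℝ)) →
          (tripleCount G X Y Finset.univ : ℝ) ≤ (1 + ε) * X.card * Y.card * n * p)))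
        ≤ ∑ pr ∈ sne ×ˢ sne, probH3 n p (fun G =>
            ((pr.2.card ≤ pr.1.card ∧
                (pr.1.card : ℝ) ≤ ε ^ (-3 : ℤ) * Real.log n / (n * p)) ∧
              ε ^ (-4 : ℤ) * pr.1.card * Real.log n <
                (tripleCount G pr.1 pr.2 Finset.univ : ℝ)) ∨
            ((ε ^ (-3 : ℤ) * Real.log n / (n * p) ≤ (pr.1.card : ℝ) ∧
                ε ^ (-3 : ℤ) * Real.log n / (n * p) ≤ (pr.2.card : ℝ)) ∧
              (1 + ε) * pr.1.card * pr.2.card * n * p <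
                (tripleCount G pr.1 pr.2 Finset.univ : ℝ))) := by
          apply probH3_union_bound hp0 hp1
          intro G hG hnP
          obtain ⟨X, hX2⟩ := not_forall.mp hnP
          obtain ⟨Y, hY2⟩ := not_forall.mp hX2
          have hbad : ((Y.card ≤ X.card ∧
              (X.card : ℝ) ≤ ε ^ (-3 : ℤ) * Real.log n / (n * p)) ∧
              ε ^ (-4 : ℤ) * X.card * Real.log n <
                (tripleCount G X Y Finset.univ : ℝ)) ∨
              ((ε ^ (-3 : ℤ) * Real.log n / (n * p) ≤ (X.card : ℝ) ∧
                ε ^ (-3 : ℤ) * Real.log n / (n * p) ≤ (Y.card : ℝ)) ∧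
              (1 + ε) * X.card * Y.card * n * p <
                (tripleCount G X Y Finset.univ : ℝ)) := by
            rcases not_and_or.mp hY2 with h | h
            · obtain ⟨hcond, hb⟩ := _root_.not_imp.mp h
              exact Or.inl ⟨hcond, not_le.mp hb⟩
            · obtain ⟨hcond, hb⟩ := _root_.not_imp.mp h
              exact Or.inr ⟨hcond, not_le.mp hb⟩
          have hpos : 0 < tripleCount G X Y Finset.univ := by
            rcases hbad with ⟨_, hb⟩ | ⟨_, hb⟩
            · have h0 : (0:ℝ) ≤ ε ^ (-4:ℤ) * X.card * Real.log n := by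
                rw [zpow_neg_four]; positivity
              have hlt : (0:ℝ) < (tripleCount G X Y Finset.univ : ℝ) :=
                lt_of_le_of_lt h0 hb
              exact_mod_cast hlt
            · have h0 : (0:ℝ) ≤ (1+ε) * X.card * Y.card * n * p :=
                mul_nonneg (by positivity) hp0
              have hlt : (0:ℝ) < (tripleCount G X Y Finset.univ : ℝ) :=
                lt_of_le_of_lt h0 hb
              exact_mod_cast hlt
          obtain ⟨hXne, hYne⟩ := nonempty_of_tcount_pos hpos
          refine ⟨(X, Y), Finset.mem_product.mpr ⟨?_, ?_⟩, hbad⟩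
          · exact Finset.mem_filter.mpr ⟨Finset.mem_powerset.mpr (Finset.subset_univ _), hXne⟩
          · exact Finset.mem_filter.mpr ⟨Finset.mem_powerset.mpr (Finset.subset_univ _), hYne⟩
      _ ≤ ∑ pr ∈ sne ×ˢ sne, 2 * (f pr.1 * f pr.2) := by
          apply Finset.sum_le_sum
          intro pr hpr
          have hmem := Finset.mem_product.mp hpr
          have hX1 : pr.1.Nonempty := (Finset.mem_filter.mp hmem.1).2
          have hff : f pr.1 * f pr.2 =
              Real.exp (-(11/10) * ((pr.1.card : ℝ) + pr.2.card) * Real.log n) := by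
            simp only [hf]
            rw [← Real.exp_add]
            congr 1
            ring
          calc probH3 n p _ ≤ probH3 n p (fun G =>
                (pr.2.card ≤ pr.1.card ∧
                  (pr.1.card : ℝ) ≤ ε ^ (-3 : ℤ) * Real.log n / (n * p)) ∧
                ε ^ (-4 : ℤ) * pr.1.card * Real.log n <
                  (tripleCount G pr.1 pr.2 Finset.univ : ℝ)) +
              probH3 n p (fun G =>
                (ε ^ (-3 : ℤ) * Real.log n / (n * p) ≤ (pr.1.card : ℝ) ∧
                  ε ^ (-3 : ℤ) * Real.log n / (n * p) ≤ (pr.2.card : ℝ)) ∧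
                (1 + ε) * pr.1.card * pr.2.card * n * p <
                  (tripleCount G pr.1 pr.2 Finset.univ : ℝ)) :=
              probH3_or hp0 hp1 _ _
            _ ≤ Real.exp (-(11/10) * ((pr.1.card : ℝ) + pr.2.card) * Real.log n) +
                Real.exp (-(11/10) * ((pr.1.card : ℝ) + pr.2.card) * Real.log n) :=
              add_le_add (case_i hε0 hε hn hp0 hp1 pr.1 pr.2 hX1)
                (case_ii hε0 hε hn hp0 hp1 pr.1 pr.2)
            _ = 2 * (f pr.1 * f pr.2) := by rw [hff]; ring
      _ = 2 * ((∑ X ∈ sne, f X) * (∑ Y ∈ sne, f Y)) := by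
          rw [Finset.sum_product, Finset.sum_mul_sum]
          simp only [Finset.mul_sum]
      _ ≤ 2 * ((2 * Real.exp (-(1/10) * Real.log n)) *
            (2 * Real.exp (-(1/10) * Real.log n))) := by
          have hs := sum_sne_le (n := n) hn
          have hnn : (0:ℝ) ≤ ∑ X ∈ sne, f X :=
            Finset.sum_nonneg (fun _ _ => (Real.exp_pos _).le)
          apply mul_le_mul_of_nonneg_left _ (by norm_num : (0:ℝ) ≤ 2)
          exact mul_le_mul hs hs hnn (by positivity)
      _ = 8 * Real.exp (-(1/5) * Real.log n) := by
          have he : Real.exp (-(1/10) * Real.log n) * Real.exp (-(1/10) * Real.log n)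
              = Real.exp (-(1/5) * Real.log n) := by
            rw [← Real.exp_add]
            congr 1
            ring
          rw [show (2:ℝ) * ((2 * Real.exp (-(1/10) * Real.log n)) *
              (2 * Real.exp (-(1/10) * Real.log n))) =
              8 * (Real.exp (-(1/10) * Real.log n) * Real.exp (-(1/10) * Real.log n)) by
            ring, he]
  rw [probH3_compl hp0 hp1]
  linarith [key]

end Stmt2

/-- Lemma 2.2: edge-count concentration for `e_G(X, Y, V(G))`. -/
theorem stmt_2 :
    ∀ ε : ℝ, 0 < ε → ε < 1 / 300 →
    ∀ p : ℕ → ℝ, (∀ n, 0 ≤ p n ∧ p n ≤ 1) →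
    Filter.Tendsto
      (fun n : ℕ => probH3 n (p n) (fun G =>
        ∀ X Y : Finset (Fin n),
          ((Y.card ≤ X.card ∧ (X.card : ℝ) ≤ ε ^ (-3 : ℤ) * Real.log n / (n * p n)) →
            (tripleCount G X Y Finset.univ : ℝ) ≤ ε ^ (-4 : ℤ) * X.card * Real.log n) ∧
          ((ε ^ (-3 : ℤ) * Real.log n / (n * p n) ≤ (X.card : ℝ) ∧
              ε ^ (-3 : ℤ) * Real.log n / (n * p n) ≤ (Y.card : ℝ)) →
            (tripleCount G X Y Finset.univ : ℝ) ≤ (1 + ε) * X.card * Y.card * n * p n)))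
      Filter.atTop (nhds 1) := by
  intro ε hε0 hε1 p hp
  have upper : ∀ n : ℕ, probH3 n (p n) (fun G =>
      ∀ X Y : Finset (Fin n),
        ((Y.card ≤ X.card ∧ (X.card : ℝ) ≤ ε ^ (-3 : ℤ) * Real.log n / (n * p n)) →
          (tripleCount G X Y Finset.univ : ℝ) ≤ ε ^ (-4 : ℤ) * X.card * Real.log n) ∧
        ((ε ^ (-3 : ℤ) * Real.log n / (n * p n) ≤ (X.card : ℝ) ∧
            ε ^ (-3 : ℤ) * Real.log n / (n * p n) ≤ (Y.card : ℝ)) →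
          (tripleCount G X Y Finset.univ : ℝ) ≤ (1 + ε) * X.card * Y.card * n * p n)) ≤ 1 :=
    fun n => Stmt2.probH3_le_one (hp n).1 (hp n).2 _
  have lower : ∀ n : ℕ, 1 ≤ n →
      1 - 8 * Real.exp (-(1/5) * Real.log n) ≤ probH3 n (p n) (fun G =>
      ∀ X Y : Finset (Fin n),
        ((Y.card ≤ X.card ∧ (X.card : ℝ) ≤ ε ^ (-3 : ℤ) * Real.log n / (n * p n)) →
          (tripleCount G X Y Finset.univ : ℝ) ≤ ε ^ (-4 : ℤ) * X.card * Real.log n) ∧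
        ((ε ^ (-3 : ℤ) * Real.log n / (n * p n) ≤ (X.card : ℝ) ∧
            ε ^ (-3 : ℤ) * Real.log n / (n * p n) ≤ (Y.card : ℝ)) →
          (tripleCount G X Y Finset.univ : ℝ) ≤ (1 + ε) * X.card * Y.card * n * p n)) :=
    fun n hn => Stmt2.global_bound hε0 hε1 hn (hp n).1 (hp n).2
  have hlog : Filter.Tendsto (fun n : ℕ => Real.log n) Filter.atTop Filter.atTop :=
    Real.tendsto_log_atTop.comp tendsto_natCast_atTop_atTop
  have h1 : Filter.Tendsto (fun n : ℕ => (1/5) * Real.log n) Filter.atTop Filter.atTop :=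
    hlog.const_mul_atTop (by norm_num)
  have h2 : Filter.Tendsto (fun n : ℕ => -(1/5) * Real.log n) Filter.atTop Filter.atBot := by
    have h := Filter.tendsto_neg_atTop_atBot.comp h1
    have heq : (fun n : ℕ => -(1/5) * Real.log n)
        = (Neg.neg ∘ fun n : ℕ => (1/5) * Real.log n) := by
      funext n; simp [Function.comp]
    rw [heq]; exact h
  have h3 : Filter.Tendsto (fun n : ℕ => Real.exp (-(1/5) * Real.log n))
      Filter.atTop (nhds 0) := Real.tendsto_exp_atBot.comp h2
  have h4 : Filter.Tendsto (fun n : ℕ => 1 - 8 * Real.exp (-(1/5) * Real.log n))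
      Filter.atTop (nhds 1) := by
    have h5 := (h3.const_mul (8:ℝ)).const_sub (1:ℝ)
    simpa using h5
  refine tendsto_of_tendsto_of_tendsto_of_le_of_le' h4 tendsto_const_nhds ?_ ?_
  · filter_upwards [Filter.eventually_ge_atTop 1] with n hn using lower n hn
  · exact Filter.Eventually.of_forall upper
end

section
/- Let H be a sufficiently large n-vertex 3-uniform hypergraph which satisfies δ_1(H) ≥ (7/16)·binom(n, 2). Then for every pair of vertices u, v ∈ V(H), there exist distinct vertices a_1, a_2, a_3, a_4 ∈ V(H)∖{u, v} such that {a_1, a_2, a_3}, {a_2, a_4, u}, and {a_3, a_4, v} are edges of H; that is, a_3, a_1, a_2, u, a_4, v, a_3 forms a loose cycle of length three through u and v. -/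
open Finset

variable {α : Type*} [DecidableEq α]

section StmtNineAux

variable {n : ℕ}

/-- codegree: number of edges containing both `x` and `y`. -/
private def cdeg (H : Finset (Finset (Fin n))) (x y : Fin n) : ℕ :=
  (H.filter fun e => x ∈ e ∧ y ∈ e).card

private lemma helper_card (A : Finset (Finset (Fin n))) (T S : Finset (Fin n)) (k : ℕ)
    (h : ∀ e ∈ A, T ⊆ e ∧ (e \ T).card = k ∧ e \ T ⊆ S) :
    A.card ≤ S.card.choose k := by
  have h1 : A.card ≤ (S.powersetCard k).card := by
    apply Finset.card_le_card_of_injOn (fun e => e \ T)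
    · intro e he
      exact Finset.mem_powersetCard.mpr ⟨(h e he).2.2, (h e he).2.1⟩
    · intro e₁ h₁ e₂ h₂ heq
      have k₁ := Finset.sdiff_union_of_subset (h e₁ (Finset.mem_coe.mp h₁)).1
      have k₂ := Finset.sdiff_union_of_subset (h e₂ (Finset.mem_coe.mp h₂)).1
      simp only at heq
      rw [← k₁, ← k₂, heq]
  rwa [Finset.card_powersetCard] at h1

private lemma cdeg_le_n (H : Finset (Finset (Fin n))) (h3 : ∀ e ∈ H, e.card = 3)
    {x y : Fin n} (hxy : x ≠ y) : cdeg H x y ≤ n := by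
  have h := helper_card (H.filter fun e => x ∈ e ∧ y ∈ e) {x, y} univ 1 ?_
  · simpa [cdeg, Finset.card_univ, Nat.choose_one_right] using h
  intro e he
  simp only [Finset.mem_filter] at he
  have hsub : ({x, y} : Finset (Fin n)) ⊆ e := by
    intro t ht
    simp only [Finset.mem_insert, Finset.mem_singleton] at ht
    rcases ht with h' | h' <;> subst h' <;> tauto
  refine ⟨hsub, ?_, Finset.subset_univ _⟩
  rw [Finset.card_sdiff_of_subset hsub, h3 e he.1, Finset.card_pair hxy]

private lemma third_of_edge (H : Finset (Finset (Fin n))) (h3 : ∀ e ∈ H, e.card = 3)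
    {e : Finset (Fin n)} (he : e ∈ H) {p q : Fin n}
    (hp : p ∈ e) (hq : q ∈ e) (hpq : p ≠ q) :
    ∃ z, z ∈ e ∧ z ≠ p ∧ z ≠ q ∧ ∀ w ∈ e, w = p ∨ w = q ∨ w = z := by
  have hsub : ({p, q} : Finset (Fin n)) ⊆ e := by
    intro t ht
    simp only [Finset.mem_insert, Finset.mem_singleton] at ht
    rcases ht with h' | h' <;> subst h' <;> assumption
  have h1 : (e \ {p, q}).card = 1 := by
    rw [Finset.card_sdiff_of_subset hsub, h3 e he, Finset.card_pair hpq]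
  obtain ⟨z, hz⟩ := Finset.card_eq_one.mp h1
  have hzm : z ∈ e \ {p, q} := by rw [hz]; exact Finset.mem_singleton_self z
  simp only [Finset.mem_sdiff, Finset.mem_insert, Finset.mem_singleton] at hzm
  push_neg at hzm
  refine ⟨z, hzm.1, hzm.2.1, hzm.2.2, ?_⟩
  intro w hw
  by_cases h1' : w = p
  · exact Or.inl h1'
  by_cases h2' : w = q
  · exact Or.inr (Or.inl h2')
  have hwm : w ∈ e \ {p, q} := by
    simp only [Finset.mem_sdiff, Finset.mem_insert, Finset.mem_singleton]
    exact ⟨hw, by tauto⟩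
  rw [hz] at hwm
  simp only [Finset.mem_singleton] at hwm
  exact Or.inr (Or.inr hwm)

private lemma triple_mem (H : Finset (Finset (Fin n))) (h3 : ∀ e ∈ H, e.card = 3)
    {e : Finset (Fin n)} (he : e ∈ H) {p q r : Fin n}
    (hp : p ∈ e) (hq : q ∈ e) (hr : r ∈ e)
    (hpq : p ≠ q) (hpr : p ≠ r) (hqr : q ≠ r) :
    ({p, q, r} : Finset (Fin n)) ∈ H := by
  have hsub : ({p, q, r} : Finset (Fin n)) ⊆ e := by
    intro t ht
    simp only [Finset.mem_insert, Finset.mem_singleton] at ht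
    rcases ht with h' | h' | h' <;> subst h' <;> assumption
  have hc : ({p, q, r} : Finset (Fin n)).card = 3 := by
    rw [Finset.card_insert_of_notMem (by simp [hpq, hpr]),
        Finset.card_insert_of_notMem (by simp [hqr]), Finset.card_singleton]
  have heq : ({p, q, r} : Finset (Fin n)) = e :=
    Finset.eq_of_subset_of_card_le hsub (by rw [h3 e he, hc])
  rwa [heq]

private lemma pick_a1 (H : Finset (Finset (Fin n))) (h3 : ∀ e ∈ H, e.card = 3)
    (x w : Fin n) (hxw : x ≠ w) (F : Finset (Fin n)) (hF : F.card ≤ 3)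
    (h6 : 6 ≤ cdeg H x w) :
    ∃ e ∈ H, x ∈ e ∧ w ∈ e ∧ ∃ z ∈ e, z ∉ F ∧ z ≠ x ∧ z ≠ w := by
  by_contra hc
  have h := helper_card (H.filter fun e => x ∈ e ∧ w ∈ e) {x, w} F 1 ?_
  · have : cdeg H x w ≤ F.card := by
      simpa [cdeg, Nat.choose_one_right] using h
    omega
  intro e he
  simp only [Finset.mem_filter] at he
  have hsub : ({x, w} : Finset (Fin n)) ⊆ e := by
    intro t ht
    simp only [Finset.mem_insert, Finset.mem_singleton] at ht
    rcases ht with h' | h' <;> subst h' <;> tauto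
  refine ⟨hsub, ?_, ?_⟩
  · rw [Finset.card_sdiff_of_subset hsub, h3 e he.1, Finset.card_pair hxw]
  · intro z hz
    simp only [Finset.mem_sdiff, Finset.mem_insert, Finset.mem_singleton] at hz
    push_neg at hz
    by_contra hzF
    exact hc ⟨e, he.1, he.2.1, he.2.2, z, hz.1, hzF, hz.2.1, hz.2.2⟩

private lemma quad_lower (N d : ℝ) (hN : (100000 : ℝ) ≤ N) (hd0 : 0 ≤ d)
    (h : 7 / 16 * (N * (N - 1) / 2) ≤ d * (d - 1) / 2 + 7 * N) :
    33 / 50 * N ≤ d := by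
  by_contra hc
  push_neg at hc
  have h2 : d * d < (33 / 50 * N) * (33 / 50 * N) := by
    apply mul_self_lt_mul_self hd0 hc
  nlinarith [mul_le_mul_of_nonneg_right hN (by linarith : (0 : ℝ) ≤ N)]

private lemma final_arith (N a b i : ℝ) (hN : (100000 : ℝ) ≤ N)
    (ha1 : 33 / 50 * N ≤ a) (hb1 : 33 / 50 * N ≤ b) (ha2 : a ≤ N) (hb2 : b ≤ N)
    (hi1 : a + b - N ≤ i) (hia : i ≤ a) (hib : i ≤ b)
    (hu : 7 / 16 * (N * (N - 1)) ≤ i * (17 / 50 * N + 1) + (a - i) * (a + 1) + 2 * N)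
    (hv : 7 / 16 * (N * (N - 1)) ≤ i * (17 / 50 * N + 1) + (b - i) * (b + 1) + 2 * N) :
    False := by
  nlinarith [mul_le_mul_of_nonneg_right hN (by linarith : (0 : ℝ) ≤ N),
    mul_nonneg (by linarith : (0:ℝ) ≤ N - a) (by linarith : (0:ℝ) ≤ b - 33/50*N),
    mul_nonneg (by linarith : (0:ℝ) ≤ N - b) (by linarith : (0:ℝ) ≤ a - 33/50*N),
    mul_nonneg (by linarith : (0:ℝ) ≤ i - (a + b - N)) (by linarith : (0:ℝ) ≤ a + b - 34/50*N),
    mul_nonneg (by linarith : (0:ℝ) ≤ N - a) (by linarith : (0:ℝ) ≤ N - b),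
    mul_nonneg (by linarith : (0:ℝ) ≤ a - i) (by linarith : (0:ℝ) ≤ N - a),
    mul_nonneg (by linarith : (0:ℝ) ≤ b - i) (by linarith : (0:ℝ) ≤ N - b)]


private lemma sum_cdeg_eq (H : Finset (Finset (Fin n))) (h3 : ∀ e ∈ H, e.card = 3)
    (x : Fin n) :
    ∑ y ∈ univ.erase x, cdeg H x y = 2 * (H.filter fun e => x ∈ e).card := by
  classical
  have h1 : ∀ y, cdeg H x y = ∑ e ∈ H, if x ∈ e ∧ y ∈ e then 1 else 0 := by
    intro y
    rw [cdeg, Finset.card_filter]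
  calc ∑ y ∈ univ.erase x, cdeg H x y
      = ∑ y ∈ univ.erase x, ∑ e ∈ H, if x ∈ e ∧ y ∈ e then 1 else 0 := by
        exact Finset.sum_congr rfl fun y _ => h1 y
    _ = ∑ e ∈ H, ∑ y ∈ univ.erase x, if x ∈ e ∧ y ∈ e then 1 else 0 := Finset.sum_comm
    _ = ∑ e ∈ H, if x ∈ e then 2 else 0 := by
        apply Finset.sum_congr rfl
        intro e he
        by_cases hx : x ∈ e
        · simp only [hx, true_and, if_true]
          have heq : ((univ.erase x).filter (fun y => y ∈ e)) = e.erase x := by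
            ext t
            simp only [Finset.mem_filter, Finset.mem_erase, Finset.mem_univ, true_and,
              and_true, and_comm]
          rw [show (∑ y ∈ univ.erase x, if y ∈ e then 1 else 0)
              = ((univ.erase x).filter (fun y => y ∈ e)).card from (Finset.card_filter _ _).symm,
            heq, Finset.card_erase_of_mem hx, h3 e he]
        · simp [hx]
    _ = 2 * (H.filter fun e => x ∈ e).card := by
        rw [Finset.sum_ite, Finset.sum_const, Finset.sum_const]
        simp [mul_comm]


/-- every vertex `x ∉ {u,v}` has at least `(33/50)n` vertices of codegree ≥ 6 with it,
avoiding `x, u, v`. -/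
private lemma Dx_lower (hn : 100000 ≤ n) (H : Finset (Finset (Fin n)))
    (h3 : ∀ e ∈ H, e.card = 3) (x u v : Fin n) (hxu : x ≠ u) (hxv : x ≠ v)
    (hdeg : (7 : ℝ) / 16 * (n.choose 2) ≤ ((H.filter fun e => x ∈ e).card : ℝ)) :
    (33 : ℝ) / 50 * n ≤
      ((univ.filter fun z => z ≠ x ∧ z ≠ u ∧ z ≠ v ∧ 6 ≤ cdeg H x z).card : ℝ) := by
  classical
  set D := univ.filter fun z => z ≠ x ∧ z ≠ u ∧ z ≠ v ∧ 6 ≤ cdeg H x z with hD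
  have hsplit : (H.filter fun e => x ∈ e).card =
      ((H.filter fun e => x ∈ e).filter (fun e => e \ {x} ⊆ D)).card +
      ((H.filter fun e => x ∈ e).filter (fun e => ¬ e \ {x} ⊆ D)).card :=
    (Finset.card_filter_add_card_filter_not _).symm
  have hA1 : ((H.filter fun e => x ∈ e).filter (fun e => e \ {x} ⊆ D)).card ≤
      D.card.choose 2 := by
    apply helper_card _ {x} D 2
    intro e he
    simp only [Finset.mem_filter] at he
    have hxe : x ∈ e := he.1.2
    refine ⟨Finset.singleton_subset_iff.mpr hxe, ?_, he.2⟩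
    rw [Finset.card_sdiff_of_subset (Finset.singleton_subset_iff.mpr hxe), h3 e he.1.1,
      Finset.card_singleton]
  have hA2 : ((H.filter fun e => x ∈ e).filter (fun e => ¬ e \ {x} ⊆ D)).card ≤ 7 * n := by
    have hsub : ((H.filter fun e => x ∈ e).filter (fun e => ¬ e \ {x} ⊆ D)) ⊆
        (univ \ insert x D).biUnion (fun z => H.filter (fun e => x ∈ e ∧ z ∈ e)) := by
      intro e he
      simp only [Finset.mem_filter] at he
      obtain ⟨z, hz1, hz2⟩ := Finset.not_subset.mp he.2
      simp only [Finset.mem_sdiff, Finset.mem_singleton] at hz1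
      refine Finset.mem_biUnion.mpr ⟨z, ?_, ?_⟩
      · simp only [Finset.mem_sdiff, Finset.mem_univ, true_and, Finset.mem_insert]
        push_neg
        exact ⟨hz1.2, hz2⟩
      · simp only [Finset.mem_filter]
        exact ⟨he.1.1, he.1.2, hz1.1⟩
    have h1 : ((H.filter fun e => x ∈ e).filter (fun e => ¬ e \ {x} ⊆ D)).card ≤
        ∑ z ∈ univ \ insert x D, (H.filter (fun e => x ∈ e ∧ z ∈ e)).card :=
      le_trans (Finset.card_le_card hsub) (Finset.card_biUnion_le)
    have h2 : ∑ z ∈ univ \ insert x D, (H.filter (fun e => x ∈ e ∧ z ∈ e)).card ≤ 7 * n := by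
      have hsplit2 := Finset.sum_filter_add_sum_filter_not (univ \ insert x D)
        (fun z => z = u ∨ z = v) (fun z => (H.filter (fun e => x ∈ e ∧ z ∈ e)).card)
      have hb1 : ∑ z ∈ (univ \ insert x D).filter (fun z => z = u ∨ z = v),
          (H.filter (fun e => x ∈ e ∧ z ∈ e)).card ≤ 2 * n := by
        have hcard : ((univ \ insert x D).filter (fun z => z = u ∨ z = v)).card ≤ 2 := by
          have : ((univ \ insert x D).filter (fun z => z = u ∨ z = v)) ⊆ {u, v} := by
            intro z hz
            simp only [Finset.mem_filter] at hz
            simp only [Finset.mem_insert, Finset.mem_singleton]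
            exact hz.2
          refine le_trans (Finset.card_le_card this) ?_
          refine le_trans (Finset.card_insert_le _ _) ?_
          simp
        calc ∑ z ∈ (univ \ insert x D).filter (fun z => z = u ∨ z = v),
            (H.filter (fun e => x ∈ e ∧ z ∈ e)).card
            ≤ ∑ _z ∈ (univ \ insert x D).filter (fun z => z = u ∨ z = v), n := by
              apply Finset.sum_le_sum
              intro z hz
              simp only [Finset.mem_filter, Finset.mem_sdiff, Finset.mem_insert] at hz
              have hzx : x ≠ z := fun h => hz.1.2 (Or.inl h.symm)
              exact cdeg_le_n H h3 hzx
          _ ≤ 2 * n := by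
              rw [Finset.sum_const, smul_eq_mul]
              exact Nat.mul_le_mul_right n hcard
      have hb2 : ∑ z ∈ (univ \ insert x D).filter (fun z => ¬(z = u ∨ z = v)),
          (H.filter (fun e => x ∈ e ∧ z ∈ e)).card ≤ 5 * n := by
        calc ∑ z ∈ (univ \ insert x D).filter (fun z => ¬(z = u ∨ z = v)),
            (H.filter (fun e => x ∈ e ∧ z ∈ e)).card
            ≤ ∑ _z ∈ (univ \ insert x D).filter (fun z => ¬(z = u ∨ z = v)), 5 := by
              apply Finset.sum_le_sum
              intro z hz
              simp only [Finset.mem_filter, Finset.mem_sdiff, Finset.mem_insert] at hz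
              push_neg at hz
              have hzD : z ∉ D := hz.1.2.2
              have hzx : z ≠ x := hz.1.2.1
              rw [hD] at hzD
              simp only [Finset.mem_filter, Finset.mem_univ, true_and] at hzD
              push_neg at hzD
              have hle := hzD hzx hz.2.1 hz.2.2
              unfold cdeg at hle
              omega
          _ ≤ 5 * n := by
              rw [Finset.sum_const, smul_eq_mul]
              have : ((univ \ insert x D).filter (fun z => ¬(z = u ∨ z = v))).card ≤ n := by
                exact le_trans (Finset.card_le_univ _) (by simp)
              exact Nat.mul_le_mul_right 5 this |>.trans (by omega)
      omega
    exact le_trans h1 h2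
  -- combine in ℝ
  have htot : (H.filter fun e => x ∈ e).card ≤ D.card.choose 2 + 7 * n := by omega
  have hreal : ((H.filter fun e => x ∈ e).card : ℝ) ≤ (D.card.choose 2 : ℝ) + 7 * n := by
    exact_mod_cast htot
  have hch : ((D.card.choose 2 : ℕ) : ℝ) = D.card * ((D.card : ℝ) - 1) / 2 :=
    Nat.cast_choose_two (K := ℝ) D.card
  have hnn : ((n.choose 2 : ℕ) : ℝ) = n * ((n : ℝ) - 1) / 2 := Nat.cast_choose_two (K := ℝ) n
  have hNr : (100000 : ℝ) ≤ n := by exact_mod_cast hn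
  apply quad_lower (n : ℝ) (D.card : ℝ) hNr (by positivity)
  rw [hnn] at hdeg
  rw [hch] at hreal
  linarith


private lemma Au_lower (hn : 100000 ≤ n) (H : Finset (Finset (Fin n)))
    (h3 : ∀ e ∈ H, e.card = 3) (u v : Fin n) (huv : u ≠ v)
    (hdeg : (7 : ℝ) / 16 * (n.choose 2) ≤ ((H.filter fun e => u ∈ e).card : ℝ))
    (A : Finset (Fin n))
    (hAmem : ∀ y, y ∈ A ↔ (y ≠ u ∧ y ≠ v ∧ ∃ e ∈ H, u ∈ e ∧ y ∈ e ∧ v ∉ e)) :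
    (33 : ℝ) / 50 * n ≤ (A.card : ℝ) := by
  classical
  have hsplit : (H.filter fun e => u ∈ e).card =
      ((H.filter fun e => u ∈ e).filter (fun e => v ∈ e)).card +
      ((H.filter fun e => u ∈ e).filter (fun e => ¬ v ∈ e)).card :=
    (Finset.card_filter_add_card_filter_not _).symm
  have hA2 : ((H.filter fun e => u ∈ e).filter (fun e => v ∈ e)).card ≤ n := by
    have hsub : ((H.filter fun e => u ∈ e).filter (fun e => v ∈ e)) ⊆
        H.filter (fun e => u ∈ e ∧ v ∈ e) := by
      intro e he
      simp only [Finset.mem_filter] at he ⊢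
      exact ⟨he.1.1, he.1.2, he.2⟩
    exact le_trans (Finset.card_le_card hsub) (cdeg_le_n H h3 huv)
  have hA1 : ((H.filter fun e => u ∈ e).filter (fun e => ¬ v ∈ e)).card ≤
      A.card.choose 2 := by
    apply helper_card _ {u} A 2
    intro e he
    simp only [Finset.mem_filter] at he
    have hue : u ∈ e := he.1.2
    refine ⟨Finset.singleton_subset_iff.mpr hue, ?_, ?_⟩
    · rw [Finset.card_sdiff_of_subset (Finset.singleton_subset_iff.mpr hue), h3 e he.1.1,
        Finset.card_singleton]
    · intro z hz
      simp only [Finset.mem_sdiff, Finset.mem_singleton] at hz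
      rw [hAmem]
      refine ⟨hz.2, ?_, e, he.1.1, hue, hz.1, he.2⟩
      intro h
      exact he.2 (h ▸ hz.1)
  have htot : (H.filter fun e => u ∈ e).card ≤ A.card.choose 2 + 7 * n := by omega
  have hreal : ((H.filter fun e => u ∈ e).card : ℝ) ≤ (A.card.choose 2 : ℝ) + 7 * n := by
    exact_mod_cast htot
  have hch : ((A.card.choose 2 : ℕ) : ℝ) = A.card * ((A.card : ℝ) - 1) / 2 :=
    Nat.cast_choose_two (K := ℝ) A.card
  have hnn : ((n.choose 2 : ℕ) : ℝ) = n * ((n : ℝ) - 1) / 2 := Nat.cast_choose_two (K := ℝ) n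
  have hNr : (100000 : ℝ) ≤ n := by exact_mod_cast hn
  apply quad_lower (n : ℝ) (A.card : ℝ) hNr (by positivity)
  rw [hnn] at hdeg
  rw [hch] at hreal
  linarith


private lemma claim3 (hn : 100000 ≤ n) (H : Finset (Finset (Fin n)))
    (h3 : ∀ e ∈ H, e.card = 3)
    (hdeg : ∀ w : Fin n, (7 : ℝ) / 16 * (n.choose 2) ≤ ((H.filter fun e => w ∈ e).card : ℝ))
    (u v : Fin n) (huv : u ≠ v)
    (hobs : ∀ a₁ a₂ a₃ a₄ : Fin n, a₁ ≠ a₂ → a₁ ≠ a₃ → a₁ ≠ a₄ → a₂ ≠ a₃ → a₂ ≠ a₄ → a₃ ≠ a₄ →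
      a₁ ≠ u → a₁ ≠ v → a₂ ≠ u → a₂ ≠ v → a₃ ≠ u → a₃ ≠ v → a₄ ≠ u → a₄ ≠ v →
      ({a₁, a₂, a₃} : Finset (Fin n)) ∈ H → ({a₂, a₄, u} : Finset (Fin n)) ∈ H →
      ({a₃, a₄, v} : Finset (Fin n)) ∈ H → False)
    (y : Fin n) (hyu : y ≠ u) (hyv : y ≠ v)
    (hwit : ∃ e ∈ H, u ∈ e ∧ y ∈ e ∧ v ∉ e) :
    (cdeg H v y : ℝ) ≤ 17 / 50 * n + 1 := by
  classical
  obtain ⟨e₀, he₀, hu₀, hy₀, hv₀⟩ := hwit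
  obtain ⟨x, hxe, hxu, hxy, -⟩ := third_of_edge H h3 he₀ hu₀ hy₀ (Ne.symm hyu)
  have hxv : x ≠ v := fun h => hv₀ (h ▸ hxe)
  have hDx := Dx_lower hn H h3 x u v hxu hxv (hdeg x)
  set D := univ.filter (fun z => z ≠ x ∧ z ≠ u ∧ z ≠ v ∧ 6 ≤ cdeg H x z) with hD
  set Nv := univ.filter
    (fun z => z ≠ u ∧ z ≠ v ∧ z ≠ y ∧ ∃ e ∈ H, v ∈ e ∧ y ∈ e ∧ z ∈ e) with hNv
  have hcap : cdeg H v y ≤ Nv.card + 1 := by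
    have h := helper_card (H.filter fun e => v ∈ e ∧ y ∈ e) {v, y} (insert u Nv) 1 ?_
    · calc cdeg H v y ≤ (insert u Nv).card.choose 1 := h
        _ = (insert u Nv).card := Nat.choose_one_right _
        _ ≤ Nv.card + 1 := Finset.card_insert_le _ _
    intro e he
    simp only [Finset.mem_filter] at he
    have hsub : ({v, y} : Finset (Fin n)) ⊆ e := by
      intro t ht
      simp only [Finset.mem_insert, Finset.mem_singleton] at ht
      rcases ht with h' | h' <;> subst h' <;> tauto
    refine ⟨hsub, ?_, ?_⟩
    · rw [Finset.card_sdiff_of_subset hsub, h3 e he.1, Finset.card_pair (Ne.symm hyv)]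
    · intro z hz
      simp only [Finset.mem_sdiff, Finset.mem_insert, Finset.mem_singleton] at hz
      push_neg at hz
      by_cases hzu : z = u
      · subst hzu; exact Finset.mem_insert_self _ _
      · apply Finset.mem_insert_of_mem
        rw [hNv]
        simp only [Finset.mem_filter, Finset.mem_univ, true_and]
        exact ⟨hzu, hz.2.1, hz.2.2, e, he.1, he.2.1, he.2.2, hz.1⟩
  have hdisj : Disjoint Nv D := by
    rw [Finset.disjoint_left]
    intro a₃ hN3 hD3
    rw [hNv] at hN3
    rw [hD] at hD3
    simp only [Finset.mem_filter, Finset.mem_univ, true_and] at hN3 hD3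
    obtain ⟨h3u, h3v, h3y, e₁, he₁, hv₁, hy₁, h31⟩ := hN3
    obtain ⟨h3x, -, -, h6⟩ := hD3
    have hF3 : ({u, v, y} : Finset (Fin n)).card ≤ 3 := by
      apply le_trans (Finset.card_insert_le _ _)
      apply Nat.succ_le_succ
      apply le_trans (Finset.card_insert_le _ _)
      simp
    obtain ⟨e₂, he₂, hxe₂, h3e₂, a₁, h1e₂, h1F, h1x, h13⟩ :=
      pick_a1 H h3 x a₃ (Ne.symm h3x) {u, v, y} hF3 h6
    have h1uvy : a₁ ≠ u ∧ a₁ ≠ v ∧ a₁ ≠ y := by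
      simp only [Finset.mem_insert, Finset.mem_singleton] at h1F
      push_neg at h1F
      exact h1F
    have m1 : ({a₁, x, a₃} : Finset (Fin n)) ∈ H :=
      triple_mem H h3 he₂ h1e₂ hxe₂ h3e₂ h1x h13 (Ne.symm h3x)
    have m2 : ({x, y, u} : Finset (Fin n)) ∈ H :=
      triple_mem H h3 he₀ hxe hy₀ hu₀ hxy hxu hyu
    have m3 : ({a₃, y, v} : Finset (Fin n)) ∈ H :=
      triple_mem H h3 he₁ h31 hy₁ hv₁ h3y h3v hyv
    exact hobs a₁ x a₃ y h1x h13 h1uvy.2.2 (Ne.symm h3x) hxy h3y h1uvy.1 h1uvy.2.1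
      hxu hxv h3u h3v hyu hyv m1 m2 m3
  have hcard : Nv.card + D.card ≤ n := by
    rw [← Finset.card_union_of_disjoint hdisj]
    exact le_trans (Finset.card_le_univ _) (by simp)
  have h1 : (cdeg H v y : ℝ) ≤ (Nv.card : ℝ) + 1 := by exact_mod_cast hcap
  have h2 : (Nv.card : ℝ) + (D.card : ℝ) ≤ n := by exact_mod_cast hcard
  linarith


/-- capacity bound via third-vertex: for `y ∉ {u,v}`, the third vertex of any edge
containing `u, y` lies in `A ∪ {v}`. -/
private lemma cap_A (H : Finset (Finset (Fin n))) (h3 : ∀ e ∈ H, e.card = 3)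
    (u v : Fin n) (huv : u ≠ v) (A : Finset (Fin n))
    (hAmem : ∀ y', y' ∈ A ↔ (y' ≠ u ∧ y' ≠ v ∧ ∃ e ∈ H, u ∈ e ∧ y' ∈ e ∧ v ∉ e))
    {y : Fin n} (hyu : y ≠ u) (hyv : y ≠ v) (S : Finset (Fin n))
    (hAS : ∀ z, z ≠ u → z ≠ v → (∃ e ∈ H, u ∈ e ∧ z ∈ e ∧ v ∉ e) → z ∈ S) :
    cdeg H u y ≤ S.card + 1 := by
  classical
  have h := helper_card (H.filter fun e => u ∈ e ∧ y ∈ e) {u, y} (insert v S) 1 ?_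
  · calc cdeg H u y ≤ (insert v S).card.choose 1 := h
      _ = (insert v S).card := Nat.choose_one_right _
      _ ≤ S.card + 1 := Finset.card_insert_le _ _
  intro e he
  simp only [Finset.mem_filter] at he
  have hsub : ({u, y} : Finset (Fin n)) ⊆ e := by
    intro t ht
    simp only [Finset.mem_insert, Finset.mem_singleton] at ht
    rcases ht with h' | h' <;> subst h' <;> tauto
  have hc1 : (e \ {u, y}).card = 1 := by
    rw [Finset.card_sdiff_of_subset hsub, h3 e he.1, Finset.card_pair (Ne.symm hyu)]
  refine ⟨hsub, hc1, ?_⟩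
  intro z hz
  obtain ⟨w, hw⟩ := Finset.card_eq_one.mp hc1
  have hzw : z = w := by rw [hw] at hz; simpa using hz
  have hz' : z ∈ e ∧ z ≠ u ∧ z ≠ y := by
    have := hz
    simp only [Finset.mem_sdiff, Finset.mem_insert, Finset.mem_singleton] at this
    push_neg at this
    exact ⟨this.1, this.2.1, this.2.2⟩
  by_cases hzv : z = v
  · subst hzv; exact Finset.mem_insert_self _ _
  · apply Finset.mem_insert_of_mem
    apply hAS z hz'.2.1 hzv
    refine ⟨e, he.1, he.2.1, hz'.1, ?_⟩
    -- v ∉ e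
    intro hv
    have hvm : v ∈ e \ {u, y} := by
      simp only [Finset.mem_sdiff, Finset.mem_insert, Finset.mem_singleton]
      push_neg
      exact ⟨hv, Ne.symm huv, Ne.symm hyv⟩
    rw [hw] at hvm
    simp only [Finset.mem_singleton] at hvm
    exact hzv (by rw [hzw, ← hvm])

/-- if `y ∉ {u,v}` and `y ∉ A` then `cdeg H u y ≤ 1`. -/
private lemma cap_one (H : Finset (Finset (Fin n))) (h3 : ∀ e ∈ H, e.card = 3)
    (u v : Fin n) (huv : u ≠ v) (A : Finset (Fin n))
    (hAmem : ∀ y', y' ∈ A ↔ (y' ≠ u ∧ y' ≠ v ∧ ∃ e ∈ H, u ∈ e ∧ y' ∈ e ∧ v ∉ e))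
    {y : Fin n} (hyu : y ≠ u) (hyv : y ≠ v) (hyA : y ∉ A) :
    cdeg H u y ≤ 1 := by
  classical
  have hnwit : ∀ z, z ≠ u → z ≠ v → (∃ e ∈ H, u ∈ e ∧ z ∈ e ∧ v ∉ e) → z ∈ (∅ : Finset (Fin n)) → True := fun _ _ _ _ _ => trivial
  -- directly: use helper with S = {v}
  have h := helper_card (H.filter fun e => u ∈ e ∧ y ∈ e) {u, y} {v} 1 ?_
  · simpa [cdeg, Nat.choose_one_right] using h
  intro e he
  simp only [Finset.mem_filter] at he
  have hsub : ({u, y} : Finset (Fin n)) ⊆ e := by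
    intro t ht
    simp only [Finset.mem_insert, Finset.mem_singleton] at ht
    rcases ht with h' | h' <;> subst h' <;> tauto
  have hc1 : (e \ {u, y}).card = 1 := by
    rw [Finset.card_sdiff_of_subset hsub, h3 e he.1, Finset.card_pair (Ne.symm hyu)]
  refine ⟨hsub, hc1, ?_⟩
  intro z hz
  obtain ⟨w, hw⟩ := Finset.card_eq_one.mp hc1
  have hzw : z = w := by rw [hw] at hz; simpa using hz
  have hz' : z ∈ e ∧ z ≠ u ∧ z ≠ y := by
    have := hz
    simp only [Finset.mem_sdiff, Finset.mem_insert, Finset.mem_singleton] at this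
    push_neg at this
    exact ⟨this.1, this.2.1, this.2.2⟩
  simp only [Finset.mem_singleton]
  by_contra hzv
  -- then y ∈ A, contradiction
  apply hyA
  rw [hAmem]
  refine ⟨hyu, hyv, e, he.1, he.2.1, he.2.2, ?_⟩
  intro hv
  have hvm : v ∈ e \ {u, y} := by
    simp only [Finset.mem_sdiff, Finset.mem_insert, Finset.mem_singleton]
    push_neg
    exact ⟨hv, Ne.symm huv, Ne.symm hyv⟩
  rw [hw] at hvm
  simp only [Finset.mem_singleton] at hvm
  exact hzv (by rw [hzw, ← hvm])

private lemma sum_bound (H : Finset (Finset (Fin n))) (h3 : ∀ e ∈ H, e.card = 3)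
    (u v : Fin n) (huv : u ≠ v) (A B : Finset (Fin n))
    (hAmem : ∀ y, y ∈ A ↔ (y ≠ u ∧ y ≠ v ∧ ∃ e ∈ H, u ∈ e ∧ y ∈ e ∧ v ∉ e))
    (hcap : ∀ y ∈ B, (cdeg H u y : ℝ) ≤ 17 / 50 * n + 1) :
    ∑ y ∈ univ.erase u, (cdeg H u y : ℝ) ≤
      ((A ∩ B).card : ℝ) * (17 / 50 * n + 1) +
      ((A \ B).card : ℝ) * ((A.card : ℝ) + 1) + 2 * n := by
  classical
  have hnn : (0:ℝ) ≤ (n:ℝ) := by positivity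
  have hAe : ∀ y ∈ A, y ≠ u ∧ y ≠ v := fun y hy => ⟨((hAmem y).mp hy).1, ((hAmem y).mp hy).2.1⟩
  -- decompose
  have hdec1 : ∑ y ∈ univ.erase u, (cdeg H u y : ℝ) =
      ∑ y ∈ (univ.erase u).filter (· ∈ A), (cdeg H u y : ℝ) +
      ∑ y ∈ (univ.erase u).filter (· ∉ A), (cdeg H u y : ℝ) :=
    (Finset.sum_filter_add_sum_filter_not _ _ _).symm
  have hfeq : (univ.erase u).filter (· ∈ A) = A := by
    ext y
    simp only [Finset.mem_filter, Finset.mem_erase, Finset.mem_univ, true_and, and_true]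
    constructor
    · exact fun h => h.2
    · intro h; exact ⟨(hAe y h).1, h⟩
  have hdec2 : ∑ y ∈ A, (cdeg H u y : ℝ) =
      ∑ y ∈ A.filter (· ∈ B), (cdeg H u y : ℝ) +
      ∑ y ∈ A.filter (· ∉ B), (cdeg H u y : ℝ) :=
    (Finset.sum_filter_add_sum_filter_not _ _ _).symm
  have hfi : A.filter (· ∈ B) = A ∩ B := Finset.filter_mem_eq_inter
  have hfs : A.filter (· ∉ B) = A \ B := (Finset.sdiff_eq_filter _ _).symm
  -- bound the three pieces
  have hb1 : ∑ y ∈ A ∩ B, (cdeg H u y : ℝ) ≤ ((A ∩ B).card : ℝ) * (17 / 50 * n + 1) := by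
    rw [← nsmul_eq_mul]
    apply Finset.sum_le_card_nsmul
    intro y hy
    exact hcap y (Finset.mem_inter.mp hy).2
  have hb2 : ∑ y ∈ A \ B, (cdeg H u y : ℝ) ≤ ((A \ B).card : ℝ) * ((A.card : ℝ) + 1) := by
    rw [← nsmul_eq_mul]
    apply Finset.sum_le_card_nsmul
    intro y hy
    have hyA := (Finset.mem_sdiff.mp hy).1
    have h := cap_A H h3 u v huv A hAmem (hAe y hyA).1 (hAe y hyA).2 A
      (fun z hzu hzv hw => (hAmem z).mpr ⟨hzu, hzv, hw⟩)
    calc (cdeg H u y : ℝ) ≤ ((A.card + 1 : ℕ) : ℝ) := by exact_mod_cast h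
      _ = (A.card : ℝ) + 1 := by push_cast; ring
  have hb3 : ∑ y ∈ (univ.erase u).filter (· ∉ A), (cdeg H u y : ℝ) ≤ 2 * n := by
    have hdec3 : ∑ y ∈ (univ.erase u).filter (· ∉ A), (cdeg H u y : ℝ) =
        ∑ y ∈ ((univ.erase u).filter (· ∉ A)).filter (· = v), (cdeg H u y : ℝ) +
        ∑ y ∈ ((univ.erase u).filter (· ∉ A)).filter (· ≠ v), (cdeg H u y : ℝ) :=
      (Finset.sum_filter_add_sum_filter_not _ _ _).symm
    have hc1 : ∑ y ∈ ((univ.erase u).filter (· ∉ A)).filter (· = v), (cdeg H u y : ℝ) ≤ n := by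
      have hsub : ((univ.erase u).filter (· ∉ A)).filter (· = v) ⊆ {v} := by
        intro z hz
        simp only [Finset.mem_filter] at hz
        simp [hz.2]
      calc ∑ y ∈ ((univ.erase u).filter (· ∉ A)).filter (· = v), (cdeg H u y : ℝ)
          ≤ ∑ y ∈ {v}, (cdeg H u y : ℝ) := by
            apply Finset.sum_le_sum_of_subset_of_nonneg hsub
            intro z _ _; positivity
        _ = (cdeg H u v : ℝ) := by simp
        _ ≤ n := by exact_mod_cast cdeg_le_n H h3 huv
    have hc2 : ∑ y ∈ ((univ.erase u).filter (· ∉ A)).filter (· ≠ v), (cdeg H u y : ℝ) ≤ n := by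
      calc ∑ y ∈ ((univ.erase u).filter (· ∉ A)).filter (· ≠ v), (cdeg H u y : ℝ)
          ≤ ∑ _y ∈ ((univ.erase u).filter (· ∉ A)).filter (· ≠ v), (1:ℝ) := by
            apply Finset.sum_le_sum
            intro y hy
            have hy' : y ≠ u ∧ y ∉ A ∧ y ≠ v := by
              simp only [Finset.mem_filter, Finset.mem_erase, Finset.mem_univ, true_and,
                and_true] at hy
              tauto
            have := cap_one H h3 u v huv A hAmem hy'.1 hy'.2.2 hy'.2.1
            exact_mod_cast this
        _ = (((univ.erase u).filter (· ∉ A)).filter (· ≠ v)).card := by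
            rw [Finset.sum_const]; simp
        _ ≤ n := by
            have := Finset.card_le_univ (((univ.erase u).filter (· ∉ A)).filter (· ≠ v))
            simp only [Finset.card_univ, Fintype.card_fin] at this
            exact_mod_cast this
    linarith
  rw [hdec1, hfeq, hdec2, hfi, hfs]
  linarith


end StmtNineAux

/-- Lemma 2.10: in a sufficiently large 3-graph with minimum vertex
degree at least `(7/16)·binom(n,2)`, every pair `u, v` lies on a loose cycle of
length three. -/
theorem stmt_9 :
    ∃ n₀ : ℕ, ∀ n : ℕ, n₀ ≤ n →
      ∀ H : Finset (Finset (Fin n)), (∀ e ∈ H, e.card = 3) →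
        (∀ v : Fin n,
          (7 : ℝ) / 16 * (n.choose 2) ≤ ((H.filter fun e => v ∈ e).card : ℝ)) →
        ∀ u v : Fin n, u ≠ v →
          ∃ a₁ a₂ a₃ a₄ : Fin n,
            a₁ ≠ a₂ ∧ a₁ ≠ a₃ ∧ a₁ ≠ a₄ ∧ a₂ ≠ a₃ ∧ a₂ ≠ a₄ ∧ a₃ ≠ a₄ ∧
            a₁ ≠ u ∧ a₁ ≠ v ∧ a₂ ≠ u ∧ a₂ ≠ v ∧ a₃ ≠ u ∧ a₃ ≠ v ∧ a₄ ≠ u ∧ a₄ ≠ v ∧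
            ({a₁, a₂, a₃} : Finset (Fin n)) ∈ H ∧
            ({a₂, a₄, u} : Finset (Fin n)) ∈ H ∧
            ({a₃, a₄, v} : Finset (Fin n)) ∈ H := by
  classical
  refine ⟨100000, ?_⟩
  intro n hn H h3 hdeg u v huv
  by_contra hobs
  have hobs₁ : ∀ a₁ a₂ a₃ a₄ : Fin n, a₁ ≠ a₂ → a₁ ≠ a₃ → a₁ ≠ a₄ → a₂ ≠ a₃ → a₂ ≠ a₄ →
      a₃ ≠ a₄ → a₁ ≠ u → a₁ ≠ v → a₂ ≠ u → a₂ ≠ v → a₃ ≠ u → a₃ ≠ v → a₄ ≠ u → a₄ ≠ v →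
      ({a₁, a₂, a₃} : Finset (Fin n)) ∈ H → ({a₂, a₄, u} : Finset (Fin n)) ∈ H →
      ({a₃, a₄, v} : Finset (Fin n)) ∈ H → False := by
    intro a₁ a₂ a₃ a₄ h12 h13 h14 h23 h24 h34 h1u h1v h2u h2v h3u h3v h4u h4v m1 m2 m3
    exact hobs ⟨a₁, a₂, a₃, a₄, h12, h13, h14, h23, h24, h34, h1u, h1v, h2u, h2v, h3u, h3v,
      h4u, h4v, m1, m2, m3⟩
  have hobs₂ : ∀ a₁ a₂ a₃ a₄ : Fin n, a₁ ≠ a₂ → a₁ ≠ a₃ → a₁ ≠ a₄ → a₂ ≠ a₃ → a₂ ≠ a₄ →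
      a₃ ≠ a₄ → a₁ ≠ v → a₁ ≠ u → a₂ ≠ v → a₂ ≠ u → a₃ ≠ v → a₃ ≠ u → a₄ ≠ v → a₄ ≠ u →
      ({a₁, a₂, a₃} : Finset (Fin n)) ∈ H → ({a₂, a₄, v} : Finset (Fin n)) ∈ H →
      ({a₃, a₄, u} : Finset (Fin n)) ∈ H → False := by
    intro a₁ a₂ a₃ a₄ h12 h13 h14 h23 h24 h34 h1v h1u h2v h2u h3v h3u h4v h4u m1 m2 m3
    have m1' : ({a₁, a₃, a₂} : Finset (Fin n)) ∈ H := by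
      rwa [Finset.pair_comm a₃ a₂] at *
    exact hobs₁ a₁ a₃ a₂ a₄ h13 h12 h14 (Ne.symm h23) h34 h24 h1u h1v h3u h3v h2u h2v h4u h4v
      m1' m3 m2
  set A := univ.filter (fun y => y ≠ u ∧ y ≠ v ∧ ∃ e ∈ H, u ∈ e ∧ y ∈ e ∧ v ∉ e) with hA
  set B := univ.filter (fun y => y ≠ v ∧ y ≠ u ∧ ∃ e ∈ H, v ∈ e ∧ y ∈ e ∧ u ∉ e) with hB
  have hAmem : ∀ y, y ∈ A ↔ (y ≠ u ∧ y ≠ v ∧ ∃ e ∈ H, u ∈ e ∧ y ∈ e ∧ v ∉ e) := by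
    intro y; rw [hA]; simp only [Finset.mem_filter, Finset.mem_univ, true_and]
  have hBmem : ∀ y, y ∈ B ↔ (y ≠ v ∧ y ≠ u ∧ ∃ e ∈ H, v ∈ e ∧ y ∈ e ∧ u ∉ e) := by
    intro y; rw [hB]; simp only [Finset.mem_filter, Finset.mem_univ, true_and]
  have hcapB : ∀ y ∈ B, (cdeg H u y : ℝ) ≤ 17 / 50 * n + 1 := by
    intro y hy
    rw [hBmem] at hy
    exact claim3 hn H h3 hdeg v u (Ne.symm huv) hobs₂ y hy.1 hy.2.1 hy.2.2
  have hcapA : ∀ y ∈ A, (cdeg H v y : ℝ) ≤ 17 / 50 * n + 1 := by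
    intro y hy
    rw [hAmem] at hy
    exact claim3 hn H h3 hdeg u v huv hobs₁ y hy.1 hy.2.1 hy.2.2
  have hSu := sum_bound H h3 u v huv A B hAmem hcapB
  have hSv := sum_bound H h3 v u (Ne.symm huv) B A hBmem hcapA
  -- lower bounds for the sums
  have hNr : (100000 : ℝ) ≤ n := by exact_mod_cast hn
  have hnn : ((n.choose 2 : ℕ) : ℝ) = n * ((n : ℝ) - 1) / 2 := Nat.cast_choose_two (K := ℝ) n
  have hTu : (7 : ℝ) / 16 * ((n : ℝ) * ((n : ℝ) - 1)) ≤ ∑ y ∈ univ.erase u, (cdeg H u y : ℝ) := by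
    have heq := sum_cdeg_eq H h3 u
    have hcast : (∑ y ∈ univ.erase u, (cdeg H u y : ℝ)) =
        2 * ((H.filter fun e => u ∈ e).card : ℝ) := by
      rw [← Nat.cast_sum, heq]; push_cast; ring
    rw [hcast]
    have h2 := hdeg u
    rw [hnn] at h2
    linarith
  have hTv : (7 : ℝ) / 16 * ((n : ℝ) * ((n : ℝ) - 1)) ≤ ∑ y ∈ univ.erase v, (cdeg H v y : ℝ) := by
    have heq := sum_cdeg_eq H h3 v
    have hcast : (∑ y ∈ univ.erase v, (cdeg H v y : ℝ)) =
        2 * ((H.filter fun e => v ∈ e).card : ℝ) := by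
      rw [← Nat.cast_sum, heq]; push_cast; ring
    rw [hcast]
    have h2 := hdeg v
    rw [hnn] at h2
    linarith
  -- cardinalities
  have haN := Au_lower hn H h3 u v huv (hdeg u) A hAmem
  have hbN := Au_lower hn H h3 v u (Ne.symm huv) (hdeg v) B hBmem
  have haU : (A.card : ℝ) ≤ n := by
    have := Finset.card_le_univ A
    simp only [Finset.card_univ, Fintype.card_fin] at this
    exact_mod_cast this
  have hbU : (B.card : ℝ) ≤ n := by
    have := Finset.card_le_univ B
    simp only [Finset.card_univ, Fintype.card_fin] at this
    exact_mod_cast this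
  have hsdA : ((A \ B).card : ℝ) = (A.card : ℝ) - ((A ∩ B).card : ℝ) := by
    have h := Finset.card_inter_add_card_sdiff A B
    have : ((A ∩ B).card : ℝ) + ((A \ B).card : ℝ) = (A.card : ℝ) := by exact_mod_cast h
    linarith
  have hsdB : ((B \ A).card : ℝ) = (B.card : ℝ) - ((A ∩ B).card : ℝ) := by
    have h := Finset.card_inter_add_card_sdiff B A
    rw [Finset.inter_comm] at h
    have : ((A ∩ B).card : ℝ) + ((B \ A).card : ℝ) = (B.card : ℝ) := by exact_mod_cast h
    linarith
  have hBAi : ((B ∩ A).card : ℝ) = ((A ∩ B).card : ℝ) := by rw [Finset.inter_comm]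
  have hiu : ((A ∩ B).card : ℝ) ≤ (A.card : ℝ) := by
    exact_mod_cast Finset.card_le_card (Finset.inter_subset_left)
  have hiv : ((A ∩ B).card : ℝ) ≤ (B.card : ℝ) := by
    exact_mod_cast Finset.card_le_card (Finset.inter_subset_right)
  have hun : (A.card : ℝ) + (B.card : ℝ) - n ≤ ((A ∩ B).card : ℝ) := by
    have h1 := Finset.card_inter_add_card_union A B
    have h2 : (A ∪ B).card ≤ n := by
      have := Finset.card_le_univ (A ∪ B)
      simpa using this
    have h1' : ((A ∩ B).card : ℝ) + ((A ∪ B).card : ℝ) = (A.card : ℝ) + (B.card : ℝ) := by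
      exact_mod_cast h1
    have h2' : ((A ∪ B).card : ℝ) ≤ n := by exact_mod_cast h2
    linarith
  rw [hsdA] at hSu
  rw [hBAi, hsdB] at hSv
  exact final_arith (n : ℝ) (A.card : ℝ) (B.card : ℝ) ((A ∩ B).card : ℝ) hNr haN hbN haU hbU
    hun hiu hiv (le_trans hTu hSu) (le_trans hTv hSv)
end
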